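/- arXiv:1708.07696 — 5 statements merged into one kernel-verified Lean document; each statement's English description precedes it below -/
import Mathlib

section
/- Suppose V_ℝ has a linear subspace V_{ℝ,0} such that, for sufficiently general v₀ ∈ V_{ℝ,0}, the space V_ℝ is the orthogonal direct sum of V_{ℝ,0} and T_{v₀}Kv₀. Then: (a) every K-orbit in V_ℝ intersects V_{ℝ,0}; (b) for any real K-stable closed subvariety X of V_ℝ with X₀ := X ∩ V_{ℝ,0}, the number of real critical points on X of the distance function to a point is constant along K-orbits of the point; and (c) the set of real critical points on X for a sufficiently general v₀ ∈ V_{ℝ,0} is contained in X₀. -/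
open Matrix
open scoped BigOperators

noncomputable section

namespace EDReal

variable {ι : Type*} [Fintype ι] [DecidableEq ι]

/-- The common zero locus in `ι → ℝ` of a set of real polynomials. -/
def rZeroLocus (I : Set (MvPolynomial ι ℝ)) : Set (ι → ℝ) :=
  {x | ∀ f ∈ I, MvPolynomial.eval x f = 0}

/-- Real Zariski-closed subsets of the affine space `ι → ℝ`. -/
def IsRZClosed (S : Set (ι → ℝ)) : Prop :=
  ∃ I : Set (MvPolynomial ι ℝ), S = rZeroLocus I

/-- The real Zariski closure of a subset of `ι → ℝ`. -/
def rzClosure (S : Set (ι → ℝ)) : Set (ι → ℝ) :=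
  ⋂₀ {C : Set (ι → ℝ) | IsRZClosed C ∧ S ⊆ C}

/-- `P x` holds for all sufficiently general `x ∈ S`. -/
def RGenerallyOn (S : Set (ι → ℝ)) (P : (ι → ℝ) → Prop) : Prop :=
  ∃ Z : Set (ι → ℝ), IsRZClosed Z ∧ S ⊆ rzClosure (S \ Z) ∧ ∀ x ∈ S \ Z, P x

/-- The ideal of real polynomials vanishing on `X`. -/
def rVanishingIdeal (X : Set (ι → ℝ)) : Set (MvPolynomial ι ℝ) :=
  {f | ∀ x ∈ X, MvPolynomial.eval x f = 0}

/-- The differential of the polynomial `f` at the point `x`, as a linear functional. -/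
def rDifferentialAt (x : ι → ℝ) (f : MvPolynomial ι ℝ) : (ι → ℝ) →ₗ[ℝ] ℝ :=
  ∑ i : ι, MvPolynomial.eval x (MvPolynomial.pderiv i f) • LinearMap.proj i

/-- The (Zariski) tangent space of `X ⊆ ι → ℝ` at `x`. -/
def rTangentAt (X : Set (ι → ℝ)) (x : ι → ℝ) : Submodule ℝ (ι → ℝ) :=
  ⨅ f ∈ rVanishingIdeal X, LinearMap.ker (rDifferentialAt x f)

/-- `x` is a smooth point of the real variety `X`: near `x` (in the Euclidean topology),
`X` is cut out by a smooth submersion whose differential at `x` cuts out the tangent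
space of `X` at `x`. -/
def RIsSmoothPt (X : Set (ι → ℝ)) (x : ι → ℝ) : Prop :=
  x ∈ X ∧ ∃ (U : Set (ι → ℝ)) (k : ℕ) (F : (ι → ℝ) → (Fin k → ℝ)),
    IsOpen U ∧ x ∈ U ∧ ContDiffOn ℝ (⊤ : ℕ∞) F U ∧ X ∩ U = {y ∈ U | F y = 0} ∧
    Function.Surjective (fderiv ℝ F x) ∧
    (rTangentAt X x : Set (ι → ℝ)) = {v | fderiv ℝ F x v = 0}

/-- The standard inner product on `ι → ℝ`. -/
def dotR (v w : ι → ℝ) : ℝ := ∑ i : ι, v i * w i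

/-- `x` is a critical point on `X` of the distance function to `u`: it is a smooth point
of `X` with `u - x` orthogonal to `T_x X`. -/
def RIsCrit (X : Set (ι → ℝ)) (u x : ι → ℝ) : Prop :=
  RIsSmoothPt X x ∧ ∀ w ∈ rTangentAt X x, dotR (u - x) w = 0

variable {n : ℕ}

/-- The underlying set of matrices of a subgroup of `GL_n(ℝ)`. -/
def rMats (K : Subgroup (GL (Fin n) ℝ)) : Set (Matrix (Fin n) (Fin n) ℝ) :=
  {A | ∃ g ∈ K, A = (g : Matrix (Fin n) (Fin n) ℝ)}

/-- The Lie algebra `𝔨` of the closed subgroup `K ≤ GL_n(ℝ)`: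
matrices `A` with `exp(tA) ∈ K` for all real `t`. -/
def rLieAlg (K : Subgroup (GL (Fin n) ℝ)) : Set (Matrix (Fin n) (Fin n) ℝ) :=
  {A | ∀ t : ℝ, NormedSpace.exp (t • A) ∈ rMats K}

/-- The tangent space `T_v Kv = 𝔨v` of the `K`-orbit of `v` at `v`. -/
def rOrbTangent (K : Subgroup (GL (Fin n) ℝ)) (v : Fin n → ℝ) : Submodule ℝ (Fin n → ℝ) :=
  Submodule.span ℝ {w | ∃ A ∈ rLieAlg K, w = A.mulVec v}

section Aux1
set_option linter.unusedSectionVars false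
open MvPolynomial

variable {ι : Type*} [Fintype ι] [DecidableEq ι]

/-! ### dotR basics -/

lemma dotR_comm (v w : ι → ℝ) : dotR v w = dotR w v := by
  simp [dotR, mul_comm]

lemma dotR_add_left (u v w : ι → ℝ) : dotR (u + v) w = dotR u w + dotR v w := by
  simp [dotR, add_mul, Finset.sum_add_distrib]

lemma dotR_sub_left (u v w : ι → ℝ) : dotR (u - v) w = dotR u w - dotR v w := by
  simp [dotR, sub_mul, Finset.sum_sub_distrib]

lemma dotR_smul_left (c : ℝ) (v w : ι → ℝ) : dotR (c • v) w = c * dotR v w := by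
  simp [dotR, Finset.mul_sum, mul_assoc]

lemma dotR_self_eq_zero {v : ι → ℝ} (h : dotR v v = 0) : v = 0 := by
  have : ∀ i ∈ Finset.univ, v i * v i = 0 := by
    intro i _
    have hnn : ∀ j ∈ (Finset.univ : Finset ι), 0 ≤ v j * v j := fun j _ => mul_self_nonneg _
    exact (Finset.sum_eq_zero_iff_of_nonneg hnn).1 h i (Finset.mem_univ i)
  funext i
  have := this i (Finset.mem_univ i)
  have := mul_self_eq_zero.mp this
  simpa using this

/-! ### derivative of dotR along curves -/

lemma HasDerivAt.dotR' {c₁ c₂ : ℝ → (ι → ℝ)} {d₁ d₂ : ι → ℝ} {t : ℝ}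
    (h₁ : HasDerivAt c₁ d₁ t) (h₂ : HasDerivAt c₂ d₂ t) :
    HasDerivAt (fun s => dotR (c₁ s) (c₂ s)) (dotR d₁ (c₂ t) + dotR (c₁ t) d₂) t := by
  have h₁' := hasDerivAt_pi.mp h₁
  have h₂' := hasDerivAt_pi.mp h₂
  have : HasDerivAt (fun s => ∑ i : ι, c₁ s i * c₂ s i)
      (∑ i : ι, (d₁ i * c₂ t i + c₁ t i * d₂ i)) t :=
    HasDerivAt.fun_sum fun i _ => (h₁' i).mul (h₂' i)
  simpa [dotR, Finset.sum_add_distrib] using this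
end Aux1
section Aux2
set_option linter.unusedSectionVars false
open MvPolynomial

variable {ι : Type*} [Fintype ι] [DecidableEq ι]

/-- The differential as a continuous linear map. -/
def rDiffCLM (x : ι → ℝ) (f : MvPolynomial ι ℝ) : (ι → ℝ) →L[ℝ] ℝ :=
  ∑ i : ι, MvPolynomial.eval x (MvPolynomial.pderiv i f) • ContinuousLinearMap.proj i

lemma rDiffCLM_apply (x : ι → ℝ) (f : MvPolynomial ι ℝ) (v : ι → ℝ) :
    rDiffCLM x f v = rDifferentialAt x f v := by
  simp [rDiffCLM, rDifferentialAt, ContinuousLinearMap.sum_apply, LinearMap.sum_apply]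

lemma hasFDerivAt_eval (f : MvPolynomial ι ℝ) (x : ι → ℝ) :
    HasFDerivAt (fun y => MvPolynomial.eval y f) (rDiffCLM x f) x := by
  induction f using MvPolynomial.induction_on with
  | C a =>
      have : rDiffCLM x (C a : MvPolynomial ι ℝ) = 0 := by
        simp [rDiffCLM]
      rw [this]
      simpa using hasFDerivAt_const a x
  | add p q hp hq =>
      have : rDiffCLM x (p + q) = rDiffCLM x p + rDiffCLM x q := by
        simp [rDiffCLM, add_smul, Finset.sum_add_distrib]
      rw [this]
      exact (hp.add hq).congr_of_eventuallyEq (Filter.Eventually.of_forall fun y => by simp)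
  | mul_X p i hp =>
      have hX : HasFDerivAt (fun y : ι → ℝ => y i) (ContinuousLinearMap.proj i (R := ℝ)
          (φ := fun _ : ι => ℝ)) x := by
        exact (ContinuousLinearMap.proj (R := ℝ) (φ := fun _ : ι => ℝ) i).hasFDerivAt (x := x)
      have h := hp.mul hX
      have heq : rDiffCLM x (p * X i)
          = x i • rDiffCLM x p + MvPolynomial.eval x p • ContinuousLinearMap.proj i := by
        refine ContinuousLinearMap.ext fun v => ?_
        simp only [rDiffCLM, ContinuousLinearMap.coe_sum', Finset.sum_apply,
          ContinuousLinearMap.add_apply, ContinuousLinearMap.coe_smul', Pi.smul_apply,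
          ContinuousLinearMap.proj_apply, smul_eq_mul, pderiv_mul, pderiv_X, map_add, _root_.map_mul]
        have hterm : ∀ j : ι, ((eval x) ((pderiv j) p) * (eval x) (X i)
              + (eval x) p * (eval x) (Pi.single (M := fun _ : ι => MvPolynomial ι ℝ) j 1 i)) * v j
            = x i * ((eval x) ((pderiv j) p) * v j)
              + (if j = i then (eval x) p * v j else 0) := by
          intro j
          by_cases hji : j = i <;> simp [hji, Pi.single_apply] <;> ring
        rw [Finset.sum_congr rfl fun j _ => hterm j, Finset.sum_add_distrib,
          Finset.sum_ite_eq' Finset.univ i (fun j => (eval x) p * v j), ← Finset.mul_sum]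
        simp
      rw [heq, add_comm]
      exact h.congr_of_eventuallyEq (Filter.Eventually.of_forall fun y => by simp)
end Aux2
section Aux3
set_option linter.unusedSectionVars false
open MvPolynomial

variable {ι : Type*} [Fintype ι] [DecidableEq ι]

/-- Composition of a polynomial with the linear map given by the matrix `M`. -/
def compM (M : Matrix ι ι ℝ) (f : MvPolynomial ι ℝ) : MvPolynomial ι ℝ :=
  MvPolynomial.bind₁ (fun i => ∑ j : ι, MvPolynomial.C (M i j) * MvPolynomial.X j) f

lemma eval_compM (M : Matrix ι ι ℝ) (f : MvPolynomial ι ℝ) (x : ι → ℝ) :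
    MvPolynomial.eval x (compM M f) = MvPolynomial.eval (M.mulVec x) f := by
  have h := MvPolynomial.eval₂Hom_bind₁ (RingHom.id ℝ) x
    (fun i => ∑ j : ι, MvPolynomial.C (M i j) * MvPolynomial.X j) f
  have e : M.mulVec x = fun i => ∑ j, M i j * x j := by ext i; rfl
  rw [e]
  simpa [compM] using h

/-- `mulVec` as a continuous linear map. -/
def mulVecCLM (M : Matrix ι ι ℝ) : (ι → ℝ) →L[ℝ] (ι → ℝ) :=
  LinearMap.toContinuousLinearMap M.mulVecLin

lemma mulVecCLM_apply (M : Matrix ι ι ℝ) (v : ι → ℝ) : mulVecCLM M v = M.mulVec v := rfl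

lemma hasFDerivAt_mulVec (M : Matrix ι ι ℝ) (x : ι → ℝ) :
    HasFDerivAt (fun y : ι → ℝ => M.mulVec y) (mulVecCLM M) x := by
  have := (mulVecCLM M).hasFDerivAt (x := x)
  refine this.congr_of_eventuallyEq (Filter.Eventually.of_forall fun y => ?_)
  exact (mulVecCLM_apply M y)

lemma rDifferentialAt_compM (M : Matrix ι ι ℝ) (f : MvPolynomial ι ℝ) (x v : ι → ℝ) :
    rDifferentialAt x (compM M f) v = rDifferentialAt (M.mulVec x) f (M.mulVec v) := by
  have h1 : HasFDerivAt (fun y => MvPolynomial.eval y (compM M f)) (rDiffCLM x (compM M f)) x :=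
    hasFDerivAt_eval _ _
  have h2 : HasFDerivAt (fun y => MvPolynomial.eval y (compM M f))
      ((rDiffCLM (M.mulVec x) f).comp (mulVecCLM M)) x := by
    have h := (hasFDerivAt_eval f (M.mulVec x)).comp x (hasFDerivAt_mulVec M x)
    have hfun : ((fun y => MvPolynomial.eval y f) ∘ fun y : ι → ℝ => M.mulVec y)
        = fun y => MvPolynomial.eval y (compM M f) := by
      funext y; exact (eval_compM M f y).symm
    rwa [hfun] at h
  have := h1.unique h2
  have happ := congrArg (fun L : (ι → ℝ) →L[ℝ] ℝ => L v) this
  simpa [rDiffCLM_apply, mulVecCLM_apply] using happ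

lemma tangent_map (X : Set (ι → ℝ)) (M : Matrix ι ι ℝ) (hstab : ∀ y ∈ X, M.mulVec y ∈ X)
    {x v : ι → ℝ} (hv : v ∈ rTangentAt X x) : M.mulVec v ∈ rTangentAt X (M.mulVec x) := by
  rw [rTangentAt, Submodule.mem_iInf]
  intro f
  rw [Submodule.mem_iInf]
  intro hf
  have hcomp : compM M f ∈ rVanishingIdeal X := by
    intro y hy
    rw [eval_compM]
    exact hf _ (hstab y hy)
  have hv' := hv
  rw [rTangentAt, Submodule.mem_iInf] at hv'
  have := hv' (compM M f)
  rw [Submodule.mem_iInf] at this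
  have h0 := this hcomp
  rw [LinearMap.mem_ker] at h0 ⊢
  rw [← rDifferentialAt_compM]
  exact h0
end Aux3
section Aux4
set_option linter.unusedSectionVars false
open NormedSpace

variable {n : ℕ}

/-- Matrix-to-vector application as a linear map, for fixed vector. -/
def mulVecApplyLM (v : Fin n → ℝ) : Matrix (Fin n) (Fin n) ℝ →ₗ[ℝ] (Fin n → ℝ) where
  toFun M := M.mulVec v
  map_add' M N := Matrix.add_mulVec M N v
  map_smul' c M := Matrix.smul_mulVec c M v

lemma hasDerivAt_exp_mulVec (A : Matrix (Fin n) (Fin n) ℝ) (v : Fin n → ℝ) :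
    HasDerivAt (fun t : ℝ => (NormedSpace.exp (t • A)).mulVec v) (A.mulVec v) 0 := by
  letI : SeminormedRing (Matrix (Fin n) (Fin n) ℝ) := Matrix.linftyOpSemiNormedRing
  letI : NormedRing (Matrix (Fin n) (Fin n) ℝ) := Matrix.linftyOpNormedRing
  letI : NormedAlgebra ℝ (Matrix (Fin n) (Fin n) ℝ) := Matrix.linftyOpNormedAlgebra
  have hexp : HasDerivAt (fun t : ℝ => NormedSpace.exp (t • A)) A 0 := by
    have h := hasDerivAt_exp_smul_const (𝕂 := ℝ) A 0
    rw [zero_smul, NormedSpace.exp_zero, one_mul] at h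
    exact h
  have hL := (LinearMap.toContinuousLinearMap (mulVecApplyLM v)).hasFDerivAt
    (x := NormedSpace.exp ((0 : ℝ) • A))
  have := hL.comp_hasDerivAt 0 hexp
  exact this

lemma rLieAlg_skew {K : Subgroup (GL (Fin n) ℝ)}
    (hKorth : ∀ g ∈ K, ∀ v w : Fin n → ℝ,
      dotR ((g : Matrix (Fin n) (Fin n) ℝ).mulVec v)
        ((g : Matrix (Fin n) (Fin n) ℝ).mulVec w) = dotR v w)
    {A : Matrix (Fin n) (Fin n) ℝ} (hA : A ∈ rLieAlg K) (v w : Fin n → ℝ) :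
    dotR (A.mulVec v) w = - dotR v (A.mulVec w) := by
  have hconst : (fun t : ℝ => dotR ((NormedSpace.exp (t • A)).mulVec v)
      ((NormedSpace.exp (t • A)).mulVec w)) = fun _ : ℝ => dotR v w := by
    funext t
    obtain ⟨g, hg, hgeq⟩ := hA t
    rw [hgeq]
    exact hKorth g hg v w
  have hd : HasDerivAt (fun t : ℝ => dotR ((NormedSpace.exp (t • A)).mulVec v)
      ((NormedSpace.exp (t • A)).mulVec w))
      (dotR (A.mulVec v) ((NormedSpace.exp ((0:ℝ) • A)).mulVec w)
        + dotR ((NormedSpace.exp ((0:ℝ) • A)).mulVec v) (A.mulVec w)) 0 :=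
    HasDerivAt.dotR' (hasDerivAt_exp_mulVec A v) (hasDerivAt_exp_mulVec A w)
  have hd0 : HasDerivAt (fun t : ℝ => dotR ((NormedSpace.exp (t • A)).mulVec v)
      ((NormedSpace.exp (t • A)).mulVec w)) 0 0 := by
    rw [hconst]; exact hasDerivAt_const 0 _
  have := hd.unique hd0
  simp only [zero_smul, NormedSpace.exp_zero, Matrix.one_mulVec] at this
  linarith

/-- Vectors in the Lie algebra tangent directions lie in the tangent space of any
K-stable variety at any of its points. -/
lemma orb_subset_tangent {K : Subgroup (GL (Fin n) ℝ)} {X : Set (Fin n → ℝ)}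
    (hstab : ∀ g ∈ K, ∀ x ∈ X, (g : Matrix (Fin n) (Fin n) ℝ).mulVec x ∈ X)
    {A : Matrix (Fin n) (Fin n) ℝ} (hA : A ∈ rLieAlg K) {x : Fin n → ℝ} (hx : x ∈ X) :
    A.mulVec x ∈ rTangentAt X x := by
  rw [rTangentAt, Submodule.mem_iInf]
  intro f
  rw [Submodule.mem_iInf]
  intro hf
  rw [LinearMap.mem_ker]
  have hzero : (fun t : ℝ => MvPolynomial.eval ((NormedSpace.exp (t • A)).mulVec x) f)
      = fun _ : ℝ => (0 : ℝ) := by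
    funext t
    obtain ⟨g, hg, hgeq⟩ := hA t
    rw [hgeq]
    exact hf _ (hstab g hg x hx)
  have hd : HasDerivAt (fun t : ℝ => MvPolynomial.eval ((NormedSpace.exp (t • A)).mulVec x) f)
      (rDiffCLM ((NormedSpace.exp ((0:ℝ) • A)).mulVec x) f (A.mulVec x)) 0 :=
    (hasFDerivAt_eval f _).comp_hasDerivAt 0 (hasDerivAt_exp_mulVec A x)
  have hd0 : HasDerivAt (fun t : ℝ => MvPolynomial.eval ((NormedSpace.exp (t • A)).mulVec x) f)
      0 0 := by
    rw [hzero]; exact hasDerivAt_const 0 _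
  have huniq := hd.unique hd0
  rw [← rDiffCLM_apply]
  simpa [zero_smul, NormedSpace.exp_zero, Matrix.one_mulVec] using huniq
end Aux4
section Aux5
set_option linter.unusedSectionVars false

variable {n : ℕ}

/-- Key lemma: if `v₀ - x` is orthogonal to `𝔨x`, then `x ∈ V₀`. -/
lemma mem_V0_of_perp {K : Subgroup (GL (Fin n) ℝ)}
    (hKorth : ∀ g ∈ K, ∀ v w : Fin n → ℝ,
      dotR ((g : Matrix (Fin n) (Fin n) ℝ).mulVec v)
        ((g : Matrix (Fin n) (Fin n) ℝ).mulVec w) = dotR v w)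
    {V₀ : Submodule ℝ (Fin n → ℝ)} {v₀ x : Fin n → ℝ}
    (hcompl : IsCompl V₀ (rOrbTangent K v₀))
    (horth : ∀ u ∈ V₀, ∀ w ∈ rOrbTangent K v₀, dotR u w = 0)
    (hx : ∀ A ∈ rLieAlg K, dotR (v₀ - x) (A.mulVec x) = 0) : x ∈ V₀ := by
  -- x is orthogonal to 𝔨 v₀
  have hxperp : ∀ w ∈ rOrbTangent K v₀, dotR x w = 0 := by
    have hgen : ∀ w ∈ {w | ∃ A ∈ rLieAlg K, w = A.mulVec v₀}, dotR x w = 0 := by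
      rintro w ⟨A, hA, rfl⟩
      have h1 : dotR x (A.mulVec x) = 0 := by
        have := rLieAlg_skew hKorth hA x x
        have hsymm : dotR (A.mulVec x) x = dotR x (A.mulVec x) := dotR_comm _ _
        linarith
      have h2 : dotR v₀ (A.mulVec x) = 0 := by
        have := hx A hA
        rw [dotR_sub_left] at this
        linarith
      have h3 : dotR (A.mulVec x) v₀ = 0 := by rw [dotR_comm]; exact h2
      have := rLieAlg_skew hKorth hA x v₀
      linarith
    intro w hw
    refine Submodule.span_induction (p := fun w _ => dotR x w = 0) ?_ ?_ ?_ ?_ hw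
    · exact fun w hw => hgen w hw
    · simp [dotR]
    · intro a b _ _ ha hb
      rw [dotR_comm, dotR_add_left, dotR_comm a x, dotR_comm b x, ha, hb, add_zero]
    · intro c a _ ha
      rw [dotR_comm, dotR_smul_left, dotR_comm a x, ha, mul_zero]
  -- decompose x
  have hsup : x ∈ V₀ ⊔ rOrbTangent K v₀ := by
    rw [hcompl.sup_eq_top]; trivial
  rw [Submodule.mem_sup] at hsup
  obtain ⟨a, ha, b, hb, hab⟩ := hsup
  have hxb : dotR x b = 0 := hxperp b hb
  have hab' : dotR a b = 0 := horth a ha b hb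
  have : dotR b b = 0 := by
    have : dotR (a + b) b = dotR a b + dotR b b := dotR_add_left a b b
    rw [hab] at this
    linarith
  have hb0 : b = 0 := dotR_self_eq_zero this
  rw [hb0, add_zero] at hab
  rwa [← hab]

/-- A generic point exists. -/
lemma exists_generic {ι : Type*} [Fintype ι] [DecidableEq ι] {S : Set (ι → ℝ)}
    {P : (ι → ℝ) → Prop} (hS : S.Nonempty) (h : RGenerallyOn S P) : ∃ x ∈ S, P x := by
  obtain ⟨Z, _, hsub, hP⟩ := h
  rcases Set.eq_empty_or_nonempty (S \ Z) with hemp | ⟨x, hx⟩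
  · exfalso
    obtain ⟨s, hs⟩ := hS
    have hclosed : IsRZClosed (∅ : Set (ι → ℝ)) := by
      refine ⟨{1}, ?_⟩
      ext x
      simp [rZeroLocus]
    have : s ∈ rzClosure (S \ Z) := hsub hs
    rw [hemp] at this
    have : s ∈ (∅ : Set (ι → ℝ)) := this _ ⟨hclosed, by simp⟩
    exact this
  · exact ⟨x, hx.1, hP x hx⟩
end Aux5
section Aux6
set_option linter.unusedSectionVars false

variable {n : ℕ}

lemma rMats_isCompact {K : Subgroup (GL (Fin n) ℝ)} (hKclosed : IsClosed (rMats K))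
    (hKorth : ∀ g ∈ K, ∀ v w : Fin n → ℝ,
      dotR ((g : Matrix (Fin n) (Fin n) ℝ).mulVec v)
        ((g : Matrix (Fin n) (Fin n) ℝ).mulVec w) = dotR v w) :
    IsCompact (rMats K) := by
  have hbig : IsCompact ((Set.univ.pi fun _ : Fin n => Set.univ.pi fun _ : Fin n =>
      Set.Icc (-1 : ℝ) 1) : Set (Matrix (Fin n) (Fin n) ℝ)) :=
    isCompact_univ_pi fun _ => isCompact_univ_pi fun _ => isCompact_Icc
  refine hbig.of_isClosed_subset hKclosed ?_
  rintro M ⟨g, hg, rfl⟩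
  intro i _
  intro j _
  -- column j of g has unit norm
  have hcol : dotR ((g : Matrix (Fin n) (Fin n) ℝ).mulVec (Pi.single j 1))
      ((g : Matrix (Fin n) (Fin n) ℝ).mulVec (Pi.single j 1)) = 1 := by
    rw [hKorth g hg]
    simp [dotR, Pi.single_apply]
  have hentry : (g : Matrix (Fin n) (Fin n) ℝ).mulVec (Pi.single j 1)
      = fun i => (g : Matrix (Fin n) (Fin n) ℝ) i j := by
    funext i
    simp [Matrix.mulVec, dotProduct, Pi.single_apply]
  rw [hentry] at hcol
  have hsq : ((g : Matrix (Fin n) (Fin n) ℝ) i j) ^ 2 ≤ 1 := by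
    have hle : ((g : Matrix (Fin n) (Fin n) ℝ) i j) ^ 2
        ≤ ∑ i' : Fin n, ((g : Matrix (Fin n) (Fin n) ℝ) i' j)
          * ((g : Matrix (Fin n) (Fin n) ℝ) i' j) := by
      rw [sq]
      exact Finset.single_le_sum (f := fun i' => ((g : Matrix (Fin n) (Fin n) ℝ) i' j)
          * ((g : Matrix (Fin n) (Fin n) ℝ) i' j)) (fun i' _ => mul_self_nonneg _) (Finset.mem_univ i)
    rw [dotR] at hcol
    rw [hcol] at hle
    exact hle
  constructor
  · nlinarith
  · nlinarith

lemma orbit_meets_V0 {K : Subgroup (GL (Fin n) ℝ)}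
    (hKclosed : IsClosed (rMats K))
    (hKorth : ∀ g ∈ K, ∀ v w : Fin n → ℝ,
      dotR ((g : Matrix (Fin n) (Fin n) ℝ).mulVec v)
        ((g : Matrix (Fin n) (Fin n) ℝ).mulVec w) = dotR v w)
    {V₀ : Submodule ℝ (Fin n → ℝ)} {v₀ : Fin n → ℝ}
    (hcompl : IsCompl V₀ (rOrbTangent K v₀))
    (horth : ∀ u ∈ V₀, ∀ w ∈ rOrbTangent K v₀, dotR u w = 0)
    (v : Fin n → ℝ) : ∃ g ∈ K, (g : Matrix (Fin n) (Fin n) ℝ).mulVec v ∈ V₀ := by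
  set O : Set (Fin n → ℝ) := (fun M : Matrix (Fin n) (Fin n) ℝ => M.mulVec v) '' rMats K with hO
  have hcont : Continuous (fun M : Matrix (Fin n) (Fin n) ℝ => M.mulVec v) := by
    apply continuous_pi
    intro i
    simp only [Matrix.mulVec, dotProduct]
    exact continuous_finset_sum _ fun k _ =>
      (continuous_apply_apply i k).mul continuous_const
  have hOcompact : IsCompact O := (rMats_isCompact hKclosed hKorth).image hcont
  have hOne : O.Nonempty := by
    refine ⟨((1 : GL (Fin n) ℝ) : Matrix (Fin n) (Fin n) ℝ).mulVec v, ⟨_, ⟨1, K.one_mem, rfl⟩, rfl⟩⟩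
  have hΦcont : Continuous (fun y : Fin n → ℝ => dotR (y - v₀) (y - v₀)) := by
    simp only [dotR]
    exact continuous_finset_sum _ fun i _ =>
      (((continuous_apply i).sub continuous_const).mul
        ((continuous_apply i).sub continuous_const))
  obtain ⟨x, hxO, hxmin⟩ := hOcompact.exists_isMinOn hOne hΦcont.continuousOn
  obtain ⟨M₀, ⟨g₀, hg₀, rfl⟩, rfl⟩ := hxO
  set x : Fin n → ℝ := (g₀ : Matrix (Fin n) (Fin n) ℝ).mulVec v with hx
  refine ⟨g₀, hg₀, ?_⟩
  refine mem_V0_of_perp hKorth hcompl horth ?_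
  intro A hA
  -- the curve t ↦ exp(tA) x stays in the orbit
  have hcurve : ∀ t : ℝ, (NormedSpace.exp (t • A)).mulVec x ∈ O := by
    intro t
    obtain ⟨h, hh, heq⟩ := hA t
    rw [heq, hx, Matrix.mulVec_mulVec, ← Units.val_mul]
    exact ⟨_, ⟨h * g₀, K.mul_mem hh hg₀, rfl⟩, rfl⟩
  set ψ : ℝ → ℝ := fun t => dotR ((NormedSpace.exp (t • A)).mulVec x - v₀)
      ((NormedSpace.exp (t • A)).mulVec x - v₀) with hψ
  have hψmin : IsLocalMin ψ 0 := by
    have : IsMinOn ψ Set.univ 0 := by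
      intro t _
      have h1 := hxmin (hcurve t)
      simpa [hψ, zero_smul, NormedSpace.exp_zero, Matrix.one_mulVec] using h1
    exact this.isLocalMin Filter.univ_mem
  have hder : HasDerivAt ψ
      (dotR (A.mulVec x) ((NormedSpace.exp ((0:ℝ) • A)).mulVec x - v₀)
        + dotR ((NormedSpace.exp ((0:ℝ) • A)).mulVec x - v₀) (A.mulVec x)) 0 := by
    have hc : HasDerivAt (fun t : ℝ => (NormedSpace.exp (t • A)).mulVec x - v₀)
        (A.mulVec x) 0 := (hasDerivAt_exp_mulVec A x).sub_const v₀
    exact HasDerivAt.dotR' hc hc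
  have hzero := hψmin.hasDerivAt_eq_zero hder
  simp only [zero_smul, NormedSpace.exp_zero, Matrix.one_mulVec] at hzero
  have hsym : dotR (A.mulVec x) (x - v₀) = dotR (x - v₀) (A.mulVec x) := dotR_comm _ _
  have : dotR (x - v₀) (A.mulVec x) = 0 := by linarith
  rw [dotR_sub_left] at this ⊢
  linarith
end Aux6
section Aux7
set_option linter.unusedSectionVars false

variable {n : ℕ}

lemma GL_cancel (g : GL (Fin n) ℝ) (y : Fin n → ℝ) :
    ((g⁻¹ : GL (Fin n) ℝ) : Matrix (Fin n) (Fin n) ℝ).mulVec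
      ((g : Matrix (Fin n) (Fin n) ℝ).mulVec y) = y := by
  rw [Matrix.mulVec_mulVec, ← Units.val_mul, inv_mul_cancel, Units.val_one, Matrix.one_mulVec]

lemma GL_cancel' (g : GL (Fin n) ℝ) (y : Fin n → ℝ) :
    (g : Matrix (Fin n) (Fin n) ℝ).mulVec
      (((g⁻¹ : GL (Fin n) ℝ) : Matrix (Fin n) (Fin n) ℝ).mulVec y) = y := by
  rw [Matrix.mulVec_mulVec, ← Units.val_mul, mul_inv_cancel, Units.val_one, Matrix.one_mulVec]

lemma continuous_mulVecFun (M : Matrix (Fin n) (Fin n) ℝ) :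
    Continuous (fun y : Fin n → ℝ => M.mulVec y) := by
  have := (mulVecCLM M).continuous
  have hcoe : ⇑(mulVecCLM M) = fun y : Fin n → ℝ => M.mulVec y := by
    funext y; exact mulVecCLM_apply M y
  rwa [hcoe] at this

lemma contDiff_mulVecFun (M : Matrix (Fin n) (Fin n) ℝ) :
    ContDiff ℝ (⊤ : ℕ∞) (fun y : Fin n → ℝ => M.mulVec y) := by
  have := (mulVecCLM M).contDiff (n := (⊤ : ℕ∞))
  have hcoe : ⇑(mulVecCLM M) = fun y : Fin n → ℝ => M.mulVec y := by
    funext y; exact mulVecCLM_apply M y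
  rwa [hcoe] at this

lemma smoothPt_map {X : Set (Fin n → ℝ)} (g : GL (Fin n) ℝ)
    (hstab : ∀ y ∈ X, (g : Matrix (Fin n) (Fin n) ℝ).mulVec y ∈ X)
    (hstab' : ∀ y ∈ X, ((g⁻¹ : GL (Fin n) ℝ) : Matrix (Fin n) (Fin n) ℝ).mulVec y ∈ X)
    {x : Fin n → ℝ} (hx : RIsSmoothPt X x) :
    RIsSmoothPt X ((g : Matrix (Fin n) (Fin n) ℝ).mulVec x) := by
  obtain ⟨hxX, U, k, F, hU, hxU, hF, hXU, hsurj, htan⟩ := hx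
  set M : Matrix (Fin n) (Fin n) ℝ := (g : Matrix (Fin n) (Fin n) ℝ) with hM
  set N : Matrix (Fin n) (Fin n) ℝ := ((g⁻¹ : GL (Fin n) ℝ) : Matrix (Fin n) (Fin n) ℝ) with hN
  have hNM : ∀ y, N.mulVec (M.mulVec y) = y := GL_cancel g
  have hMN : ∀ y, M.mulVec (N.mulVec y) = y := GL_cancel' g
  have hmemX : ∀ y, y ∈ X ↔ N.mulVec y ∈ X := by
    intro y
    constructor
    · exact fun h => hstab' y h
    · intro h
      have := hstab _ h
      rwa [hMN] at this
  -- tangent space transformation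
  have htanset : ∀ v : Fin n → ℝ,
      v ∈ rTangentAt X (M.mulVec x) ↔ N.mulVec v ∈ rTangentAt X x := by
    intro v
    constructor
    · intro h
      have := tangent_map X N (fun y hy => (hmemX y).mp hy) h
      rwa [hNM] at this
    · intro h
      have := tangent_map X M (fun y hy => hstab y hy) h
      rwa [hMN] at this
  -- derivative of F at x
  have hFdiff : HasFDerivAt F (fderiv ℝ F x) x := by
    have h1 : ContDiffAt ℝ (⊤ : ℕ∞) F x := hF.contDiffAt (hU.mem_nhds hxU)
    exact (h1.differentiableAt (by simp)).hasFDerivAt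
  have hcomp : HasFDerivAt (fun y => F (N.mulVec y))
      ((fderiv ℝ F x).comp (mulVecCLM N)) (M.mulVec x) := by
    have hN' : HasFDerivAt (fun y : Fin n → ℝ => N.mulVec y) (mulVecCLM N) (M.mulVec x) :=
      hasFDerivAt_mulVec N _
    have hF2 : HasFDerivAt F (fderiv ℝ F x) (N.mulVec (M.mulVec x)) := by
      rw [hNM x]; exact hFdiff
    exact hF2.comp (M.mulVec x) hN'
  have hfderiv : fderiv ℝ (fun y => F (N.mulVec y)) (M.mulVec x)
      = (fderiv ℝ F x).comp (mulVecCLM N) := hcomp.fderiv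
  refine ⟨hstab x hxX, (fun y : Fin n → ℝ => N.mulVec y) ⁻¹' U, k,
    fun y => F (N.mulVec y), hU.preimage (continuous_mulVecFun N), ?_, ?_, ?_, ?_, ?_⟩
  · show N.mulVec (M.mulVec x) ∈ U
    rwa [hNM]
  · exact hF.comp (contDiff_mulVecFun N).contDiffOn (fun y hy => hy)
  · ext y
    constructor
    · rintro ⟨hyX, hyU⟩
      exact ⟨hyU, by
        have : N.mulVec y ∈ X ∩ U := ⟨(hmemX y).mp hyX, hyU⟩
        rw [hXU] at this
        exact this.2⟩
    · rintro ⟨hyU, hyF⟩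
      have : N.mulVec y ∈ X ∩ U := by
        rw [hXU]
        exact ⟨hyU, hyF⟩
      exact ⟨(hmemX y).mpr this.1, hyU⟩
  · rw [hfderiv]
    intro z
    obtain ⟨w, hw⟩ := hsurj z
    refine ⟨M.mulVec w, ?_⟩
    simp only [ContinuousLinearMap.coe_comp', Function.comp_apply, mulVecCLM_apply]
    rwa [hNM]
  · rw [hfderiv]
    ext v
    simp only [SetLike.mem_coe, Set.mem_setOf_eq, ContinuousLinearMap.coe_comp',
      Function.comp_apply, mulVecCLM_apply]
    rw [htanset v, ← SetLike.mem_coe, htan]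
    exact Iff.rfl

lemma crit_map {K : Subgroup (GL (Fin n) ℝ)} {X : Set (Fin n → ℝ)}
    (hKorth : ∀ g ∈ K, ∀ v w : Fin n → ℝ,
      dotR ((g : Matrix (Fin n) (Fin n) ℝ).mulVec v)
        ((g : Matrix (Fin n) (Fin n) ℝ).mulVec w) = dotR v w)
    (hstab : ∀ g ∈ K, ∀ x ∈ X, (g : Matrix (Fin n) (Fin n) ℝ).mulVec x ∈ X)
    {g : GL (Fin n) ℝ} (hg : g ∈ K) (u x : Fin n → ℝ) (h : RIsCrit X u x) :
    RIsCrit X ((g : Matrix (Fin n) (Fin n) ℝ).mulVec u)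
      ((g : Matrix (Fin n) (Fin n) ℝ).mulVec x) := by
  obtain ⟨hsm, horth⟩ := h
  constructor
  · exact smoothPt_map g (fun y hy => hstab g hg y hy)
      (fun y hy => hstab g⁻¹ (K.inv_mem hg) y hy) hsm
  · intro w hw
    set M : Matrix (Fin n) (Fin n) ℝ := (g : Matrix (Fin n) (Fin n) ℝ) with hM
    set N : Matrix (Fin n) (Fin n) ℝ := ((g⁻¹ : GL (Fin n) ℝ) : Matrix (Fin n) (Fin n) ℝ)
      with hN
    have hNw : N.mulVec w ∈ rTangentAt X x := by
      have := tangent_map X N (fun y hy => hstab g⁻¹ (K.inv_mem hg) y hy) hw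
      rwa [GL_cancel g x] at this
    have h0 := horth _ hNw
    have : dotR (M.mulVec (u - x)) (M.mulVec (N.mulVec w)) = dotR (u - x) (N.mulVec w) :=
      hKorth g hg _ _
    rw [GL_cancel' g w] at this
    rw [h0] at this
    rw [Matrix.mulVec_sub] at this
    exact this
end Aux7
section Aux8
set_option linter.unusedSectionVars false

variable {n : ℕ}

lemma crit_set_image {K : Subgroup (GL (Fin n) ℝ)} {X : Set (Fin n → ℝ)}
    (hKorth : ∀ g ∈ K, ∀ v w : Fin n → ℝ,
      dotR ((g : Matrix (Fin n) (Fin n) ℝ).mulVec v)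
        ((g : Matrix (Fin n) (Fin n) ℝ).mulVec w) = dotR v w)
    (hstab : ∀ g ∈ K, ∀ x ∈ X, (g : Matrix (Fin n) (Fin n) ℝ).mulVec x ∈ X)
    {g : GL (Fin n) ℝ} (hg : g ∈ K) (u : Fin n → ℝ) :
    {x | RIsCrit X ((g : Matrix (Fin n) (Fin n) ℝ).mulVec u) x}
      = (fun x => (g : Matrix (Fin n) (Fin n) ℝ).mulVec x) '' {x | RIsCrit X u x} := by
  ext x
  constructor
  · intro hx
    refine ⟨((g⁻¹ : GL (Fin n) ℝ) : Matrix (Fin n) (Fin n) ℝ).mulVec x, ?_, GL_cancel' g x⟩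
    have := crit_map hKorth hstab (K.inv_mem hg)
      ((g : Matrix (Fin n) (Fin n) ℝ).mulVec u) x hx
    rwa [GL_cancel g u] at this
  · rintro ⟨y, hy, rfl⟩
    exact crit_map hKorth hstab hg u y hy

lemma crit_subset_V0 {K : Subgroup (GL (Fin n) ℝ)} {X : Set (Fin n → ℝ)}
    {V₀ : Submodule ℝ (Fin n → ℝ)} {v₀ : Fin n → ℝ}
    (hKorth : ∀ g ∈ K, ∀ v w : Fin n → ℝ,
      dotR ((g : Matrix (Fin n) (Fin n) ℝ).mulVec v)
        ((g : Matrix (Fin n) (Fin n) ℝ).mulVec w) = dotR v w)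
    (hstab : ∀ g ∈ K, ∀ x ∈ X, (g : Matrix (Fin n) (Fin n) ℝ).mulVec x ∈ X)
    (hcompl : IsCompl V₀ (rOrbTangent K v₀))
    (horth : ∀ u ∈ V₀, ∀ w ∈ rOrbTangent K v₀, dotR u w = 0)
    (x : Fin n → ℝ) (hcrit : RIsCrit X v₀ x) : x ∈ X ∩ (V₀ : Set (Fin n → ℝ)) := by
  refine ⟨hcrit.1.1, mem_V0_of_perp hKorth hcompl horth ?_⟩
  intro A hA
  exact hcrit.2 _ (orb_subset_tangent hstab hA hcrit.1.1)
end Aux8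


/-- Let `V_ℝ = ℝⁿ` with its Euclidean inner product, and let `K` be a Lie group
(realized as a closed subgroup of `GL_n(ℝ)`) acting orthogonally on `V_ℝ`.
Suppose `V_ℝ` has a linear subspace `V₀` such that, for sufficiently general `v₀ ∈ V₀`,
`V_ℝ` is the orthogonal direct sum of `V₀` and `T_{v₀}Kv₀`. Then:
(a) every `K`-orbit intersects `V₀`;
(b) for every real `K`-stable closed subvariety `X` of `V_ℝ`, the number of real critical
points on `X` of the distance function to a point is constant along `K`-orbits of the point;
(c) the set of real critical points on `X` for a sufficiently general `v₀ ∈ V₀` is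
contained in `X₀ = X ∩ V₀`. -/
theorem real_transfer {n : ℕ} (K : Subgroup (GL (Fin n) ℝ))
    (hKclosed : IsClosed (rMats K))
    (hKorth : ∀ g ∈ K, ∀ v w : Fin n → ℝ,
      dotR ((g : Matrix (Fin n) (Fin n) ℝ).mulVec v)
        ((g : Matrix (Fin n) (Fin n) ℝ).mulVec w) = dotR v w)
    (V₀ : Submodule ℝ (Fin n → ℝ))
    (hV₀ : RGenerallyOn (V₀ : Set (Fin n → ℝ)) fun v₀ =>
      IsCompl V₀ (rOrbTangent K v₀) ∧
      ∀ u ∈ V₀, ∀ w ∈ rOrbTangent K v₀, dotR u w = 0) :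
    (∀ v : Fin n → ℝ, ∃ g ∈ K, (g : Matrix (Fin n) (Fin n) ℝ).mulVec v ∈ V₀) ∧
    (∀ X : Set (Fin n → ℝ), IsRZClosed X →
      (∀ g ∈ K, ∀ x ∈ X, (g : Matrix (Fin n) (Fin n) ℝ).mulVec x ∈ X) →
      ((∀ u : Fin n → ℝ, ∀ g ∈ K,
          {x | RIsCrit X u x}.ncard
            = {x | RIsCrit X ((g : Matrix (Fin n) (Fin n) ℝ).mulVec u) x}.ncard) ∧
        RGenerallyOn (V₀ : Set (Fin n → ℝ)) fun v₀ =>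
          ∀ x : Fin n → ℝ, RIsCrit X v₀ x → x ∈ X ∩ (V₀ : Set (Fin n → ℝ)))) := by
  have hV₀ne : (V₀ : Set (Fin n → ℝ)).Nonempty := ⟨0, V₀.zero_mem⟩
  obtain ⟨v₀, hv₀mem, hv₀c, hv₀o⟩ := exists_generic hV₀ne hV₀
  constructor
  · exact fun v => orbit_meets_V0 hKclosed hKorth hv₀c hv₀o v
  · intro X _ hstab
    constructor
    · intro u g hg
      rw [crit_set_image hKorth hstab hg u]
      rw [Set.ncard_image_of_injective _ (Function.LeftInverse.injective (GL_cancel g))]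
    · obtain ⟨Z, hZc, hZd, hZP⟩ := hV₀
      exact ⟨Z, hZc, hZd, fun v₀' hv₀' x hcrit =>
        crit_subset_V0 hKorth hstab (hZP v₀' hv₀').1 (hZP v₀' hv₀').2 x hcrit⟩


end EDReal
end
end

section
/- Suppose V has a linear subspace V₀ such that, for sufficiently general v₀ ∈ V₀, the space V is the orthogonal direct sum of V₀ and T_{v₀}Gv₀ = 𝔤v₀. Then the set GV₀ = {gv₀ : g ∈ G, v₀ ∈ V₀} is Zariski-dense in V. -/
open Matrix
open scoped BigOperators

noncomputable section

namespace ED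

variable {ι : Type*} [Fintype ι] [DecidableEq ι]

/-- The common zero locus in `ι → ℂ` of a set of polynomials. -/
def zeroLocus (I : Set (MvPolynomial ι ℂ)) : Set (ι → ℂ) :=
  {x | ∀ f ∈ I, MvPolynomial.eval x f = 0}

/-- Zariski-closed subsets of the affine space `ι → ℂ`. -/
def IsZClosed (S : Set (ι → ℂ)) : Prop :=
  ∃ I : Set (MvPolynomial ι ℂ), S = zeroLocus I

/-- The Zariski closure of a subset of `ι → ℂ`. -/
def zClosure (S : Set (ι → ℂ)) : Set (ι → ℂ) :=
  ⋂₀ {C : Set (ι → ℂ) | IsZClosed C ∧ S ⊆ C}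

/-- `P x` holds for all sufficiently general `x ∈ S`: it holds on a
Zariski-dense (in `S`) complement in `S` of a Zariski-closed set. -/
def GenerallyOn (S : Set (ι → ℂ)) (P : (ι → ℂ) → Prop) : Prop :=
  ∃ Z : Set (ι → ℂ), IsZClosed Z ∧ S ⊆ zClosure (S \ Z) ∧ ∀ x ∈ S \ Z, P x

/-- The ideal of polynomials vanishing on `X`. -/
def vanishingIdeal (X : Set (ι → ℂ)) : Set (MvPolynomial ι ℂ) :=
  {f | ∀ x ∈ X, MvPolynomial.eval x f = 0}

/-- The differential of the polynomial `f` at the point `x`, as a linear functional. -/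
def differentialAt (x : ι → ℂ) (f : MvPolynomial ι ℂ) : (ι → ℂ) →ₗ[ℂ] ℂ :=
  ∑ i : ι, MvPolynomial.eval x (MvPolynomial.pderiv i f) • LinearMap.proj i

/-- The (Zariski) tangent space of `X ⊆ ι → ℂ` at `x`. -/
def tangentAt (X : Set (ι → ℂ)) (x : ι → ℂ) : Submodule ℂ (ι → ℂ) :=
  ⨅ f ∈ vanishingIdeal X, LinearMap.ker (differentialAt x f)

/-- `x` is a smooth point of the variety `X`: near `x` (in the Euclidean topology),
`X` is cut out by a holomorphic submersion whose differential at `x` cuts out the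
tangent space of `X` at `x`. -/
def IsSmoothPt (X : Set (ι → ℂ)) (x : ι → ℂ) : Prop :=
  x ∈ X ∧ ∃ (U : Set (ι → ℂ)) (k : ℕ) (F : (ι → ℂ) → (Fin k → ℂ)),
    IsOpen U ∧ x ∈ U ∧ DifferentiableOn ℂ F U ∧ X ∩ U = {y ∈ U | F y = 0} ∧
    Function.Surjective (fderiv ℂ F x) ∧
    (tangentAt X x : Set (ι → ℂ)) = {v | fderiv ℂ F x v = 0}

/-- `x` is an ED critical point on `X` for the data point `u`, with respect to the
bilinear form `B`: it is a smooth point of `X` with `u - x ⊥ T_x X`. -/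
def IsEDCrit (B : (ι → ℂ) →ₗ[ℂ] (ι → ℂ) →ₗ[ℂ] ℂ) (X : Set (ι → ℂ)) (u x : ι → ℂ) : Prop :=
  IsSmoothPt X x ∧ ∀ w ∈ tangentAt X x, B (u - x) w = 0

/-- `X ⊆ V'` has ED degree `d` (measured inside the subspace `V'`, with respect to the
bilinear form `B`): for sufficiently general `u ∈ V'`, the number of ED critical points
on `X` for `u` is finite and equal to `d`. -/
def HasEDDegreeOn (B : (ι → ℂ) →ₗ[ℂ] (ι → ℂ) →ₗ[ℂ] ℂ) (V' : Set (ι → ℂ))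
    (X : Set (ι → ℂ)) (d : ℕ) : Prop :=
  GenerallyOn V' fun u => {x | IsEDCrit B X u x}.Finite ∧ {x | IsEDCrit B X u x}.ncard = d

variable {n : ℕ}

/-- The underlying set of matrices of a subgroup of `GL_n(ℂ)`. -/
def matsM (G : Subgroup (GL (Fin n) ℂ)) : Set (Matrix (Fin n) (Fin n) ℂ) :=
  {A | ∃ g ∈ G, A = (g : Matrix (Fin n) (Fin n) ℂ)}

/-- The underlying set of a subgroup of `GL_n(ℂ)`, viewed inside the affine space
of functions `Fin n × Fin n → ℂ`. -/
def matsF (G : Subgroup (GL (Fin n) ℂ)) : Set ((Fin n × Fin n) → ℂ) :=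
  {x | ∃ g ∈ G, x = fun p => (g : Matrix (Fin n) (Fin n) ℂ) p.1 p.2}

/-- `G` is a (Zariski-closed) linear algebraic subgroup of `GL_n(ℂ)`. -/
def IsAlgebraicSubgroup (G : Subgroup (GL (Fin n) ℂ)) : Prop :=
  ∃ C : Set ((Fin n × Fin n) → ℂ), IsZClosed C ∧
    matsF G = C ∩ {x | IsUnit (Matrix.of fun i j => x (i, j)).det}

/-- The Lie algebra `𝔤` of `G`: the tangent space of `G` at the identity matrix. -/
def lieAlg (G : Subgroup (GL (Fin n) ℂ)) : Submodule ℂ ((Fin n × Fin n) → ℂ) :=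
  tangentAt (matsF G) (fun p => if p.1 = p.2 then 1 else 0)

/-- Matrix-vector multiplication `A ↦ A·v` as a linear map in the matrix `A`. -/
def mulVecL (v : Fin n → ℂ) : ((Fin n × Fin n) → ℂ) →ₗ[ℂ] (Fin n → ℂ) :=
  LinearMap.pi fun i => ∑ j : Fin n, v j • LinearMap.proj (i, j)

/-- The tangent space `T_v Gv = 𝔤v` of the orbit `Gv` at `v`. -/
def orbTangent (G : Subgroup (GL (Fin n) ℂ)) (v : Fin n → ℂ) : Submodule ℂ (Fin n → ℂ) :=
  (lieAlg G).map (mulVecL v)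

/-- The representation of `G ≤ GL_n(ℂ)` on `ℂⁿ` is orthogonal with respect to `B`. -/
def IsOrthogonalRep (B : (Fin n → ℂ) →ₗ[ℂ] (Fin n → ℂ) →ₗ[ℂ] ℂ)
    (G : Subgroup (GL (Fin n) ℂ)) : Prop :=
  ∀ g ∈ G, ∀ v w : Fin n → ℂ,
    B ((g : Matrix (Fin n) (Fin n) ℂ).mulVec v) ((g : Matrix (Fin n) (Fin n) ℂ).mulVec w) = B v w

/-- `ℂⁿ` is the orthogonal direct sum (w.r.t. `B`) of the subspaces `V₀` and `T`. -/
def IsOrthoDirectSum (B : (Fin n → ℂ) →ₗ[ℂ] (Fin n → ℂ) →ₗ[ℂ] ℂ)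
    (V₀ T : Submodule ℂ (Fin n → ℂ)) : Prop :=
  IsCompl V₀ T ∧ ∀ u ∈ V₀, ∀ w ∈ T, B u w = 0

/-- `G` is irreducible (= connected) as an algebraic group. -/
def IsIrreducibleSubgroup (G : Subgroup (GL (Fin n) ℂ)) : Prop :=
  ∀ C₁ C₂ : Set ((Fin n × Fin n) → ℂ), IsZClosed C₁ → IsZClosed C₂ →
    matsF G ⊆ C₁ ∪ C₂ → matsF G ⊆ C₁ ∨ matsF G ⊆ C₂

/-- `G` is reductive: it is the Zariski closure of a compact subgroup. -/
def IsReductive (G : Subgroup (GL (Fin n) ℂ)) : Prop :=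
  ∃ K : Subgroup (GL (Fin n) ℂ), K ≤ G ∧ IsCompact (matsM K) ∧ matsF G ⊆ zClosure (matsF K)


/-! ### Auxiliary lemmas for the proof -/

section Aux
set_option linter.unusedSectionVars false

/-- Substitution of the line `t ↦ x + t•w` into a multivariate polynomial. -/
def lineP (x w : ι → ℂ) (f : MvPolynomial ι ℂ) : Polynomial ℂ :=
  MvPolynomial.aeval (fun i => Polynomial.C (x i) + Polynomial.C (w i) * Polynomial.X) f

lemma lineP_eval (x w : ι → ℂ) (f : MvPolynomial ι ℂ) (t : ℂ) :
    (lineP x w f).eval t = MvPolynomial.eval (fun i => x i + w i * t) f := by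
  have h := MvPolynomial.comp_aeval_apply
    (fun i => Polynomial.C (x i) + Polynomial.C (w i) * Polynomial.X)
    (Polynomial.aeval t : Polynomial ℂ →ₐ[ℂ] ℂ) f
  simp only [map_add, _root_.map_mul, Polynomial.aeval_C, Polynomial.aeval_X] at h
  rw [lineP, ← Polynomial.coe_aeval_eq_eval, h, ← MvPolynomial.coe_aeval_eq_eval]
  norm_num

lemma derivLine (x w : ι → ℂ) (f : MvPolynomial ι ℂ) :
    Polynomial.eval 0 (Polynomial.derivative (lineP x w f))
      = ∑ i, MvPolynomial.eval x (MvPolynomial.pderiv i f) * w i := by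
  induction f using MvPolynomial.induction_on with
  | C a => simp [lineP]
  | add p q hp hq =>
      simp only [lineP, map_add, Polynomial.derivative_add, Polynomial.eval_add] at *
      rw [hp, hq, ← Finset.sum_add_distrib]
      exact Finset.sum_congr rfl fun j _ => by ring
  | mul_X p i hp =>
      have hev : Polynomial.eval 0 (lineP x w p) = MvPolynomial.eval x p := by
        rw [lineP_eval]; norm_num
      simp only [lineP, _root_.map_mul, MvPolynomial.aeval_X] at *
      rw [Polynomial.derivative_mul]
      simp only [Polynomial.derivative_add, Polynomial.derivative_C,
        Polynomial.derivative_mul, Polynomial.derivative_X, Polynomial.eval_add,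
        Polynomial.eval_mul, Polynomial.eval_C, Polynomial.eval_X, mul_zero, zero_add, mul_one,
        zero_mul, add_zero, Polynomial.eval_zero]
      rw [hp, hev]
      have key : ∀ j, MvPolynomial.eval x (MvPolynomial.pderiv j (p * MvPolynomial.X i)) * w j
          = MvPolynomial.eval x (MvPolynomial.pderiv j p) * w j * x i
            + (if i = j then MvPolynomial.eval x p * w j else 0) := by
        intro j
        rw [MvPolynomial.pderiv_mul]
        by_cases hij : i = j
        · subst hij; simp [MvPolynomial.pderiv_X_self]; ring
        · rw [MvPolynomial.pderiv_X_of_ne hij]; simp [hij]; ring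
      rw [Finset.sum_congr rfl (fun j _ => key j), Finset.sum_add_distrib,
        Finset.sum_ite_eq (Finset.univ) i (fun j => MvPolynomial.eval x p * w j)]
      simp [Finset.sum_mul]

lemma dirderiv_zero (x w : ι → ℂ) (f : MvPolynomial ι ℂ)
    (h : ∀ t : ℂ, MvPolynomial.eval (fun i => x i + w i * t) f = 0) :
    ∑ i, MvPolynomial.eval x (MvPolynomial.pderiv i f) * w i = 0 := by
  have hz : lineP x w f = 0 :=
    Polynomial.funext fun t => by rw [lineP_eval, h t, Polynomial.eval_zero]
  rw [← derivLine, hz]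
  simp

lemma aeval_eval {κ : Type*} (y : κ → ℂ) (g : ι → MvPolynomial κ ℂ) (f : MvPolynomial ι ℂ) :
    MvPolynomial.eval y (MvPolynomial.aeval g f)
      = MvPolynomial.eval (fun i => MvPolynomial.eval y (g i)) f := by
  have h := MvPolynomial.comp_aeval_apply g
    (MvPolynomial.aeval y : MvPolynomial κ ℂ →ₐ[ℂ] ℂ) f
  rw [show (MvPolynomial.aeval y : MvPolynomial κ ℂ → ℂ) = MvPolynomial.eval y from rfl] at h
  rw [h]
  rfl

lemma aeval_lineP {κ : Type*} (g : ι → MvPolynomial κ ℂ) (x w : κ → ℂ) (f : MvPolynomial ι ℂ) :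
    lineP x w (MvPolynomial.aeval g f)
      = MvPolynomial.aeval (fun i => lineP x w (g i)) f :=
  MvPolynomial.comp_aeval_apply g
    (MvPolynomial.aeval (fun i => Polynomial.C (x i) + Polynomial.C (w i) * Polynomial.X)
      : MvPolynomial κ ℂ →ₐ[ℂ] Polynomial ℂ) f

lemma coeff_pderiv (i : ι) (f : MvPolynomial ι ℂ) (k : ι →₀ ℕ) :
    MvPolynomial.coeff k (MvPolynomial.pderiv i f)
      = ((k i + 1 : ℕ) : ℂ) * MvPolynomial.coeff (k + Finsupp.single i 1) f := by
  induction f using MvPolynomial.induction_on' with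
  | monomial s a =>
      rw [MvPolynomial.pderiv_monomial, MvPolynomial.coeff_monomial,
        MvPolynomial.coeff_monomial]
      by_cases h : s = k + Finsupp.single i 1
      · subst h
        rw [if_pos (add_tsub_cancel_right _ _), if_pos rfl]
        have h3 : ((k + Finsupp.single i 1 : ι →₀ ℕ)) i = k i + 1 := by simp
        rw [h3]
        push_cast
        ring
      · rw [if_neg h, mul_zero]
        split_ifs with h2
        · have hs : s i = 0 := by
            by_contra hne
            have hle : Finsupp.single i 1 ≤ s := by
              rw [Finsupp.single_le_iff]
              omega
            have := tsub_add_cancel_of_le hle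
            rw [h2] at this
            exact h this.symm
          simp [hs]
        · rfl
  | add p q hp hq => simp [hp, hq, mul_add]

lemma eq_C_of_pderiv_eq_zero {f : MvPolynomial ι ℂ}
    (h : ∀ i, MvPolynomial.pderiv i f = 0) :
    f = MvPolynomial.C (MvPolynomial.coeff 0 f) := by
  apply MvPolynomial.ext
  intro m
  rw [MvPolynomial.coeff_C]
  by_cases hm : 0 = m
  · rw [if_pos hm, ← hm]
  · rw [if_neg hm]
    have hex : ∃ i, m i ≠ 0 := by
      by_contra hc
      push_neg at hc
      have : m = 0 := Finsupp.ext fun i => by simp [hc i]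
      exact hm this.symm
    obtain ⟨i, hi⟩ := hex
    have hle : Finsupp.single i 1 ≤ m := by rw [Finsupp.single_le_iff]; omega
    have hdec : (m - Finsupp.single i 1) + Finsupp.single i 1 = m := tsub_add_cancel_of_le hle
    have h0 := coeff_pderiv i f (m - Finsupp.single i 1)
    rw [h i, MvPolynomial.coeff_zero, hdec] at h0
    have hne : ((((m - Finsupp.single i 1 : ι →₀ ℕ)) i + 1 : ℕ) : ℂ) ≠ 0 :=
      Nat.cast_ne_zero.mpr (by omega)
    exact ((mul_eq_zero.mp h0.symm).resolve_left hne)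

lemma totalDegree_pderiv_lt {f : MvPolynomial ι ℂ} {i : ι}
    (h : MvPolynomial.pderiv i f ≠ 0) :
    (MvPolynomial.pderiv i f).totalDegree < f.totalDegree := by
  have key : ∀ k ∈ (MvPolynomial.pderiv i f).support,
      k.sum (fun _ n => n) < f.totalDegree := by
    intro k hk
    have hc : MvPolynomial.coeff (k + Finsupp.single i 1) f ≠ 0 := by
      intro hz
      have hcp := coeff_pderiv i f k
      rw [hz, mul_zero] at hcp
      exact (MvPolynomial.mem_support_iff.mp hk) hcp
    have hle := MvPolynomial.le_totalDegree (MvPolynomial.mem_support_iff.mpr hc)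
    have hsum : (k + Finsupp.single i 1).sum (fun _ n => n) = k.sum (fun _ n => n) + 1 := by
      rw [Finsupp.sum_add_index' (fun _ => rfl) (fun _ _ _ => rfl),
        Finsupp.sum_single_index rfl]
    omega
  rw [MvPolynomial.totalDegree]
  apply Finset.sup_lt_iff ?_ |>.mpr key
  obtain ⟨k, hk⟩ := MvPolynomial.support_nonempty.mpr h
  exact lt_of_le_of_lt (Nat.zero_le _) (key k hk)

lemma zero_of_derivClosed (P : Set (MvPolynomial ι ℂ))
    (hP : ∀ f ∈ P, ∀ i, MvPolynomial.pderiv i f ∈ P)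
    (h0 : ∀ f ∈ P, MvPolynomial.eval (0 : ι → ℂ) f = 0) :
    ∀ f ∈ P, f = 0 := by
  have key : ∀ d : ℕ, ∀ f ∈ P, f.totalDegree < d → f = 0 := by
    intro d
    induction d with
    | zero => intro f _ hlt; exact absurd hlt (Nat.not_lt_zero _)
    | succ d ih =>
        intro f hf hlt
        have hder : ∀ i, MvPolynomial.pderiv i f = 0 := by
          intro i
          by_contra hne
          exact hne (ih _ (hP f hf i)
            (lt_of_lt_of_le (totalDegree_pderiv_lt hne) (Nat.lt_succ_iff.mp hlt)))
        have hC := eq_C_of_pderiv_eq_zero hder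
        have he := h0 f hf
        rw [hC] at he ⊢
        rw [MvPolynomial.eval_C] at he
        rw [he, map_zero]
  exact fun f hf => key (f.totalDegree + 1) f hf (Nat.lt_succ_self _)

lemma zClosure_min {S C : Set (ι → ℂ)} (hC : IsZClosed C) (h : S ⊆ C) : zClosure S ⊆ C :=
  fun _x hx => hx C ⟨hC, h⟩

lemma eval_zero_on_zClosure {S : Set (ι → ℂ)} {f : MvPolynomial ι ℂ}
    (h : ∀ x ∈ S, MvPolynomial.eval x f = 0) :
    ∀ x ∈ zClosure S, MvPolynomial.eval x f = 0 := by
  intro x hx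
  have hsub : zClosure S ⊆ zeroLocus {f} :=
    zClosure_min ⟨{f}, rfl⟩ (fun y hy g hg => by rw [Set.mem_singleton_iff.mp hg]; exact h y hy)
  exact hsub hx f rfl

lemma differentialAt_apply (x : ι → ℂ) (f : MvPolynomial ι ℂ) (w : ι → ℂ) :
    differentialAt x f w = ∑ i, MvPolynomial.eval x (MvPolynomial.pderiv i f) * w i := by
  simp [differentialAt, smul_eq_mul]

lemma eval_mulVec (M : Matrix (Fin n) (Fin n) ℂ) (v : Fin n → ℂ) (f : MvPolynomial (Fin n) ℂ) :
    MvPolynomial.eval v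
      (MvPolynomial.aeval (fun i => ∑ j, MvPolynomial.C (M i j) * MvPolynomial.X j) f)
      = MvPolynomial.eval (M.mulVec v) f := by
  rw [aeval_eval]
  have hfun : (fun i => MvPolynomial.eval v (∑ j, MvPolynomial.C (M i j) * MvPolynomial.X j))
      = M.mulVec v := by
    funext i
    simp [Matrix.mulVec, dotProduct]
  rw [hfun]

lemma isZClosed_mulVec_preimage (M : Matrix (Fin n) (Fin n) ℂ) {C : Set (Fin n → ℂ)}
    (hC : IsZClosed C) : IsZClosed {v : Fin n → ℂ | M.mulVec v ∈ C} := by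
  obtain ⟨I, rfl⟩ := hC
  refine ⟨(fun f => MvPolynomial.aeval
    (fun i => ∑ j, MvPolynomial.C (M i j) * MvPolynomial.X j) f) '' I, ?_⟩
  ext v
  constructor
  · rintro hv g ⟨f, hf, rfl⟩
    rw [eval_mulVec]
    exact hv f hf
  · intro hv f hf
    have := hv _ ⟨f, hf, rfl⟩
    rwa [eval_mulVec] at this

lemma mulVecL_apply (v : Fin n → ℂ) (X : (Fin n × Fin n) → ℂ) (i : Fin n) :
    mulVecL v X i = ∑ j, v j * X (i, j) := by
  simp [mulVecL]

lemma lineP_comp (M : Matrix (Fin n) (Fin n) ℂ) (v₀ : Fin n → ℂ) (X : (Fin n × Fin n) → ℂ)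
    (f : MvPolynomial (Fin n) ℂ) :
    lineP (fun p : Fin n × Fin n => if p.1 = p.2 then (1 : ℂ) else 0) X
      (MvPolynomial.aeval (fun i : Fin n =>
        ∑ p : Fin n × Fin n, MvPolynomial.C (M i p.1 * v₀ p.2) * MvPolynomial.X p) f)
      = lineP (M.mulVec v₀) (M.mulVec (mulVecL v₀ X)) f := by
  rw [aeval_lineP]
  have hfun : (fun i => lineP (fun p : Fin n × Fin n => if p.1 = p.2 then (1:ℂ) else 0) X
        (∑ p : Fin n × Fin n, MvPolynomial.C (M i p.1 * v₀ p.2) * MvPolynomial.X p))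
      = fun i => Polynomial.C (M.mulVec v₀ i)
          + Polynomial.C (M.mulVec (mulVecL v₀ X) i) * Polynomial.X := by
    funext i
    have e1 : ∑ p : Fin n × Fin n,
        M i p.1 * v₀ p.2 * (if p.1 = p.2 then (1 : ℂ) else 0) = M.mulVec v₀ i := by
      rw [Fintype.sum_prod_type]
      simp [Matrix.mulVec, dotProduct, mul_ite, Finset.sum_ite_eq]
    have e2 : ∑ p : Fin n × Fin n, M i p.1 * v₀ p.2 * X p = M.mulVec (mulVecL v₀ X) i := by
      rw [Fintype.sum_prod_type]
      simp only [Matrix.mulVec, dotProduct, mulVecL_apply, Finset.mul_sum]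
      exact Finset.sum_congr rfl fun j _ => Finset.sum_congr rfl fun k _ => by ring
    rw [lineP]
    calc MvPolynomial.aeval
          (fun p : Fin n × Fin n => Polynomial.C (if p.1 = p.2 then (1:ℂ) else 0)
            + Polynomial.C (X p) * Polynomial.X)
          (∑ p : Fin n × Fin n, MvPolynomial.C (M i p.1 * v₀ p.2) * MvPolynomial.X p)
        = ∑ p : Fin n × Fin n, Polynomial.C (M i p.1 * v₀ p.2) *
            (Polynomial.C (if p.1 = p.2 then (1:ℂ) else 0) + Polynomial.C (X p) * Polynomial.X) := by
          rw [map_sum]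
          refine Finset.sum_congr rfl fun p _ => ?_
          rw [_root_.map_mul, MvPolynomial.aeval_X, MvPolynomial.aeval_C]
          rfl
      _ = Polynomial.C (∑ p : Fin n × Fin n,
              M i p.1 * v₀ p.2 * (if p.1 = p.2 then (1:ℂ) else 0))
            + Polynomial.C (∑ p : Fin n × Fin n, M i p.1 * v₀ p.2 * X p) * Polynomial.X := by
          rw [map_sum, map_sum, Finset.sum_mul, ← Finset.sum_add_distrib]
          refine Finset.sum_congr rfl fun p _ => ?_
          simp only [_root_.map_mul]
          ring
      _ = Polynomial.C (M.mulVec v₀ i)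
            + Polynomial.C (M.mulVec (mulVecL v₀ X) i) * Polynomial.X := by
          rw [e1, e2]
  rw [hfun]
  rfl

lemma pderiv_vanish_at {n : ℕ} (G : Subgroup (GL (Fin n) ℂ))
    (V₀ : Submodule ℂ (Fin n → ℂ)) (f : MvPolynomial (Fin n) ℂ)
    (hf : ∀ g ∈ G, ∀ v ∈ V₀,
      MvPolynomial.eval ((g : Matrix (Fin n) (Fin n) ℂ).mulVec v) f = 0)
    (g : GL (Fin n) ℂ) (hg : g ∈ G) (v₀ : Fin n → ℂ) (hv : v₀ ∈ V₀)
    (hsup : V₀ ⊔ orbTangent G v₀ = ⊤) (i : Fin n) :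
    MvPolynomial.eval ((g : Matrix (Fin n) (Fin n) ℂ).mulVec v₀) (MvPolynomial.pderiv i f)
      = 0 := by
  set M : Matrix (Fin n) (Fin n) ℂ := (g : Matrix (Fin n) (Fin n) ℂ) with hM
  set x : Fin n → ℂ := M.mulVec v₀ with hx
  suffices hall : ∀ w : Fin n → ℂ,
      ∑ j, MvPolynomial.eval x (MvPolynomial.pderiv j f) * w j = 0 by
    have h := hall (Pi.single i 1)
    rw [Finset.sum_eq_single i (fun j _ hj => by simp [Pi.single_eq_of_ne hj])
      (fun hmem => absurd (Finset.mem_univ i) hmem)] at h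
    simpa using h
  intro w
  set y : Fin n → ℂ := ((g⁻¹ : GL (Fin n) ℂ) : Matrix (Fin n) (Fin n) ℂ).mulVec w with hy
  have hw : w = M.mulVec y := by
    rw [hy, Matrix.mulVec_mulVec, hM, g.mul_inv, Matrix.one_mulVec]
  have hymem : y ∈ V₀ ⊔ orbTangent G v₀ := by rw [hsup]; trivial
  obtain ⟨u, hu, m, hm, hum⟩ := Submodule.mem_sup.mp hymem
  have hsplit : ∑ j, MvPolynomial.eval x (MvPolynomial.pderiv j f) * w j
      = (∑ j, MvPolynomial.eval x (MvPolynomial.pderiv j f) * (M.mulVec u) j)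
        + ∑ j, MvPolynomial.eval x (MvPolynomial.pderiv j f) * (M.mulVec m) j := by
    rw [hw, ← hum, Matrix.mulVec_add, ← Finset.sum_add_distrib]
    exact Finset.sum_congr rfl fun j _ => by simp only [Pi.add_apply]; ring
  rw [hsplit]
  have h1 : ∑ j, MvPolynomial.eval x (MvPolynomial.pderiv j f) * (M.mulVec u) j = 0 := by
    apply dirderiv_zero
    intro t
    have hline : (fun j => x j + (M.mulVec u) j * t) = M.mulVec (v₀ + t • u) := by
      funext j
      rw [Matrix.mulVec_add, hx]
      simp [Matrix.mulVec_smul, smul_eq_mul]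
      ring
    rw [hline]
    exact hf g hg _ (V₀.add_mem hv (V₀.smul_mem t hu))
  have h2 : ∑ j, MvPolynomial.eval x (MvPolynomial.pderiv j f) * (M.mulVec m) j = 0 := by
    rw [orbTangent] at hm
    obtain ⟨X, hX, rfl⟩ := Submodule.mem_map.mp hm
    set F : MvPolynomial (Fin n × Fin n) ℂ := MvPolynomial.aeval (fun i : Fin n =>
      ∑ p : Fin n × Fin n, MvPolynomial.C (M i p.1 * v₀ p.2) * MvPolynomial.X p) f with hF
    have hFvan : F ∈ vanishingIdeal (matsF G) := by
      intro A hA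
      obtain ⟨h, hhG, rfl⟩ := hA
      rw [hF, aeval_eval]
      have hfun : (fun i => MvPolynomial.eval (fun p => (h : Matrix (Fin n) (Fin n) ℂ) p.1 p.2)
            (∑ p : Fin n × Fin n, MvPolynomial.C (M i p.1 * v₀ p.2) * MvPolynomial.X p))
          = ((g * h : GL (Fin n) ℂ) : Matrix (Fin n) (Fin n) ℂ).mulVec v₀ := by
        funext i
        rw [Units.val_mul]
        simp only [map_sum, _root_.map_mul, MvPolynomial.eval_C, MvPolynomial.eval_X]
        rw [Fintype.sum_prod_type]
        simp only [Matrix.mulVec, dotProduct, Matrix.mul_apply, Finset.sum_mul]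
        rw [Finset.sum_comm]
        exact Finset.sum_congr rfl fun k _ => Finset.sum_congr rfl fun j _ => by ring
      rw [hfun]
      exact hf (g * h) (mul_mem hg hhG) v₀ hv
    have hXker : differentialAt (fun p : Fin n × Fin n => if p.1 = p.2 then (1:ℂ) else 0) F X
        = 0 := by
      have hk1 := (Submodule.mem_iInf _).mp hX F
      have hk2 := (Submodule.mem_iInf _).mp hk1 hFvan
      exact LinearMap.mem_ker.mp hk2
    rw [differentialAt_apply] at hXker
    calc ∑ j, MvPolynomial.eval x (MvPolynomial.pderiv j f) * (M.mulVec (mulVecL v₀ X)) j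
        = Polynomial.eval 0 (Polynomial.derivative (lineP x (M.mulVec (mulVecL v₀ X)) f)) :=
          (derivLine _ _ _).symm
      _ = Polynomial.eval 0 (Polynomial.derivative
            (lineP (fun p : Fin n × Fin n => if p.1 = p.2 then (1:ℂ) else 0) X F)) := by
          rw [hF, lineP_comp, hx]
      _ = ∑ p : Fin n × Fin n, MvPolynomial.eval
            (fun p : Fin n × Fin n => if p.1 = p.2 then (1:ℂ) else 0)
            (MvPolynomial.pderiv p F) * X p := derivLine _ _ _
      _ = 0 := hXker
  rw [h1, h2, add_zero]

end Aux

/-- If `V = ℂⁿ` (with non-degenerate symmetric bilinear form `B` and orthogonal action of the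
complex algebraic group `G`) has a linear subspace `V₀` such that, for sufficiently general
`v₀ ∈ V₀`, the space `V` is the orthogonal direct sum of `V₀` and `T_{v₀}Gv₀ = 𝔤v₀`, then
the set `GV₀ = {g v₀ : g ∈ G, v₀ ∈ V₀}` is Zariski-dense in `V`. -/
theorem gv0_dense {n : ℕ}
    (B : (Fin n → ℂ) →ₗ[ℂ] (Fin n → ℂ) →ₗ[ℂ] ℂ)
    (hBsymm : ∀ v w : Fin n → ℂ, B v w = B w v)
    (hBnondeg : ∀ v : Fin n → ℂ, (∀ w : Fin n → ℂ, B v w = 0) → v = 0)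
    (G : Subgroup (GL (Fin n) ℂ)) (hGalg : IsAlgebraicSubgroup G)
    (hGorth : IsOrthogonalRep B G)
    (V₀ : Submodule ℂ (Fin n → ℂ))
    (hV₀ : GenerallyOn (V₀ : Set (Fin n → ℂ)) fun v₀ =>
      IsOrthoDirectSum B V₀ (orbTangent G v₀)) :
    zClosure {y | ∃ g ∈ G, ∃ v₀ ∈ (V₀ : Set (Fin n → ℂ)),
      y = (g : Matrix (Fin n) (Fin n) ℂ).mulVec v₀} = Set.univ := by
  classical
  obtain ⟨Z, hZc, hdense, hODS⟩ := hV₀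
  set GV : Set (Fin n → ℂ) := {y | ∃ g ∈ G, ∃ v₀ ∈ (V₀ : Set (Fin n → ℂ)),
      y = (g : Matrix (Fin n) (Fin n) ℂ).mulVec v₀} with hGV
  set T : Set (Fin n → ℂ) := {y | ∃ g ∈ G, ∃ v ∈ (V₀ : Set (Fin n → ℂ)) \ Z,
      y = (g : Matrix (Fin n) (Fin n) ℂ).mulVec v} with hT
  have hGVsubT : GV ⊆ zClosure T := by
    rintro y ⟨g, hg, v₀, hv₀, rfl⟩
    intro C hC
    obtain ⟨hCc, hTC⟩ := hC
    have hpre : IsZClosed {v : Fin n → ℂ | (g : Matrix (Fin n) (Fin n) ℂ).mulVec v ∈ C} :=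
      isZClosed_mulVec_preimage _ hCc
    have hsub : (V₀ : Set (Fin n → ℂ)) \ Z
        ⊆ {v : Fin n → ℂ | (g : Matrix (Fin n) (Fin n) ℂ).mulVec v ∈ C} :=
      fun v hv => hTC ⟨g, hg, v, hv, rfl⟩
    exact zClosure_min hpre hsub (hdense hv₀)
  set P : Set (MvPolynomial (Fin n) ℂ) := {f | ∀ y ∈ GV, MvPolynomial.eval y f = 0} with hP
  have hPd : ∀ f ∈ P, ∀ i, MvPolynomial.pderiv i f ∈ P := by
    intro f hf i
    have hvT : ∀ y ∈ T, MvPolynomial.eval y (MvPolynomial.pderiv i f) = 0 := by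
      rintro y ⟨g, hg, v, ⟨hvV, hvZ⟩, rfl⟩
      have hsup : V₀ ⊔ orbTangent G v = ⊤ := (hODS v ⟨hvV, hvZ⟩).1.sup_eq_top
      exact pderiv_vanish_at G V₀ f
        (fun g' hg' u hu => hf _ ⟨g', hg', u, hu, rfl⟩) g hg v hvV hsup i
    intro y hy
    exact eval_zero_on_zClosure hvT y (hGVsubT hy)
  have hP0 : ∀ f ∈ P, MvPolynomial.eval (0 : Fin n → ℂ) f = 0 := by
    intro f hf
    exact hf 0 ⟨1, one_mem G, 0, V₀.zero_mem, by simp⟩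
  have hzero := zero_of_derivClosed P hPd hP0
  apply Set.eq_univ_of_forall
  intro xx
  apply Set.mem_sInter.mpr
  rintro C ⟨⟨I, rfl⟩, hsub⟩
  intro f hfI
  have hfP : f ∈ P := fun y hy => hsub hy f hfI
  rw [hzero f hfP, map_zero]

end ED
end
end

section
/- Let V and W be finite-dimensional complex vector spaces, let f₁, …, f_m : V → W be linear maps, and let w ∈ W. Then the following are equivalent: (i) for sufficiently general v ∈ V (i.e., for all v in a dense Zariski-open subset of V), w ∈ span_ℂ(f₁(v), …, f_m(v)); (ii) 1 ⊗ w lies in the ℂ(V*)-span of f₁, …, f_m inside ℂ(V*) ⊗_ℂ W, where ℂ(V*) is the field of rational functions on V and each f_i is viewed as an element of ℂ(V*) ⊗_ℂ W. -/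
open Matrix
open scoped BigOperators

noncomputable section

namespace ED

variable {ι : Type*} [Fintype ι] [DecidableEq ι]

variable {n : ℕ}

/-- The coordinate polynomials of a linear map `ℂ^a → ℂ^b`: `coordPoly g j` is the linear
polynomial on `ℂ^a` computing the `j`-th coordinate of `g`. -/
def coordPoly {a b : ℕ} (g : (Fin a → ℂ) →ₗ[ℂ] (Fin b → ℂ)) (j : Fin b) :
    MvPolynomial (Fin a) ℂ :=
  ∑ l : Fin a, MvPolynomial.C (g (Pi.single l 1) j) * MvPolynomial.X l

set_option linter.unusedSectionVars false

lemma eval_coordPoly {a b : ℕ} (g : (Fin a → ℂ) →ₗ[ℂ] (Fin b → ℂ)) (j : Fin b)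
    (v : Fin a → ℂ) : MvPolynomial.eval v (coordPoly g j) = g v j := by
  have := LinearMap.pi_apply_eq_sum_univ g v
  rw [this]
  simp only [coordPoly, map_sum, _root_.map_mul, MvPolynomial.eval_C, MvPolynomial.eval_X,
    Finset.sum_apply, Pi.smul_apply, smul_eq_mul]
  refine Finset.sum_congr rfl fun l _ => ?_
  have : (Pi.single l (1:ℂ) : Fin a → ℂ) = fun j => if l = j then 1 else 0 := by
    ext k; simp [Pi.single_apply, eq_comm]
  rw [this]; simp [mul_comm]

lemma univ_subset_zClosure {q : MvPolynomial ι ℂ} (hq : q ≠ 0) :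
    (Set.univ : Set (ι → ℂ)) ⊆ zClosure (Set.univ \ zeroLocus {q}) := by
  intro x _
  rw [zClosure, Set.mem_sInter]
  rintro C ⟨⟨I, rfl⟩, hsub⟩
  intro f hf
  have hfq : f * q = 0 := by
    apply MvPolynomial.funext
    intro y
    rw [_root_.map_mul, map_zero]
    by_cases hy : MvPolynomial.eval y q = 0
    · rw [hy, mul_zero]
    · have : y ∈ Set.univ \ zeroLocus {q} := ⟨trivial, by simp [zeroLocus, hy]⟩
      have := hsub this f hf
      rw [this, zero_mul]
  rcases mul_eq_zero.1 hfq with h | h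
  · rw [h, map_zero]
  · exact absurd h hq

lemma exists_of_generallyOn {P : (ι → ℂ) → Prop}
    (h : GenerallyOn Set.univ P) {q : MvPolynomial ι ℂ} (hq : q ≠ 0) :
    ∃ x, MvPolynomial.eval x q ≠ 0 ∧ P x := by
  obtain ⟨Z, hZ, hdense, hP⟩ := h
  by_contra hc
  push_neg at hc
  have hsub : Set.univ \ Z ⊆ zeroLocus {q} := by
    intro x hx
    intro f hf
    rcases hf with rfl
    by_contra hne
    exact (hc x hne) (hP x hx)
  have hcl : zClosure (Set.univ \ Z) ⊆ zeroLocus {q} :=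
    Set.sInter_subset_of_mem ⟨⟨{q}, rfl⟩, hsub⟩
  have : ∀ x, MvPolynomial.eval x q = 0 := fun x =>
    hcl (hdense (Set.mem_univ x)) q rfl
  exact hq (MvPolynomial.funext fun x => by rw [this, map_zero])

set_option maxHeartbeats 1000000
set_option synthInstance.maxHeartbeats 1000000

/-- Let `V = ℂ^a` and `W = ℂ^b` be finite-dimensional complex vector spaces, let
`f₁, …, f_m : V → W` be linear maps and let `w ∈ W`. The following are equivalent:
(i) for sufficiently general `v ∈ V`, `w ∈ span_ℂ(f₁(v), …, f_m(v))`;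
(ii) `1 ⊗ w` lies in the `ℂ(V*)`-span of `f₁, …, f_m` inside `ℂ(V*) ⊗_ℂ W`, where
`ℂ(V*)` is the field of rational functions on `V` (the fraction field of the polynomial
ring) and where, in coordinates, `f_i` corresponds to the vector of its coordinate
polynomials. -/
theorem generic_span_iff_rational_span {a b m : ℕ}
    (f : Fin m → ((Fin a → ℂ) →ₗ[ℂ] (Fin b → ℂ))) (w : Fin b → ℂ) :
    (GenerallyOn (Set.univ : Set (Fin a → ℂ)) fun v =>
        w ∈ Submodule.span ℂ (Set.range fun i => f i v)) ↔
      (∃ c : Fin m → FractionRing (MvPolynomial (Fin a) ℂ), ∀ j : Fin b,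
        algebraMap (MvPolynomial (Fin a) ℂ) (FractionRing (MvPolynomial (Fin a) ℂ))
            (MvPolynomial.C (w j))
          = ∑ i, c i *
              algebraMap (MvPolynomial (Fin a) ℂ) (FractionRing (MvPolynomial (Fin a) ℂ))
                (coordPoly (f i) j)) := by
  set R := MvPolynomial (Fin a) ℂ with hR
  set K := FractionRing R with hK
  set al : R →+* K := algebraMap R K with hal
  have hinj : Function.Injective al := IsFractionRing.injective R K
  constructor
  · -- (i) → (ii)
    intro hgen
    by_contra hii
    set F : Fin m → (Fin b → K) := fun i j => al (coordPoly (f i) j) with hF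
    set W : Fin b → K := fun j => al (MvPolynomial.C (w j)) with hWdef
    have hW : W ∉ Submodule.span K (Set.range F) := by
      intro hmem
      rw [Submodule.mem_span_range_iff_exists_fun] at hmem
      obtain ⟨c, hc⟩ := hmem
      refine hii ⟨c, fun j => ?_⟩
      have := congrFun hc j
      simpa [Finset.sum_apply] using this.symm
    obtain ⟨φ, hφW, hφ0⟩ := Submodule.exists_dual_map_eq_bot_of_notMem hW inferInstance
    set z : Fin b → K := fun j => φ (fun k => if j = k then 1 else 0) with hz
    have hφeq : ∀ x : Fin b → K, φ x = ∑ j, x j * z j := by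
      intro x
      rw [LinearMap.pi_apply_eq_sum_univ φ x]
      simp [hz, smul_eq_mul]
    obtain ⟨q, hq⟩ := IsLocalization.exist_integer_multiples_of_finite
      (nonZeroDivisors R) z
    choose p hp using hq
    have hqz : ∀ j, al (p j) = al q * z j := by
      intro j
      rw [hp j, Algebra.smul_def]
    have hFi0 : ∀ i, φ (F i) = 0 := by
      intro i
      have : φ (F i) ∈ Submodule.map φ (Submodule.span K (Set.range F)) :=
        Submodule.mem_map_of_mem (Submodule.subset_span ⟨i, rfl⟩)
      rw [hφ0] at this
      simpa using this
    have hA : ∀ i, ∑ j, coordPoly (f i) j * p j = 0 := by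
      intro i
      apply hinj
      rw [map_sum, map_zero]
      calc ∑ j, al (coordPoly (f i) j * p j)
          = ∑ j, F i j * (al q * z j) := by
            refine Finset.sum_congr rfl fun j _ => ?_
            rw [_root_.map_mul, hqz j, hF]
        _ = al q * ∑ j, F i j * z j := by
            rw [Finset.mul_sum]
            exact Finset.sum_congr rfl fun j _ => by ring
        _ = al q * φ (F i) := by rw [hφeq (F i)]
        _ = 0 := by rw [hFi0 i, mul_zero]
    have halW : al (∑ j, MvPolynomial.C (w j) * p j) = al q * φ W := by
      rw [map_sum, hφeq W, Finset.mul_sum]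
      refine Finset.sum_congr rfl fun j _ => ?_
      rw [_root_.map_mul, hqz j, hWdef]
      ring
    have hq0 : al q ≠ 0 := by
      intro h0
      exact nonZeroDivisors.ne_zero q.2 (hinj (by rw [h0, map_zero]))
    have hh : (∑ j, MvPolynomial.C (w j) * p j) ≠ 0 := by
      intro h0
      rw [h0, map_zero] at halW
      exact hφW (by
        rcases mul_eq_zero.1 halW.symm with h | h
        · exact absurd h hq0
        · exact h)
    obtain ⟨x, hx, hPx⟩ := exists_of_generallyOn hgen hh
    rw [Submodule.mem_span_range_iff_exists_fun] at hPx
    obtain ⟨c, hc⟩ := hPx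
    apply hx
    have hwj : ∀ j, w j = ∑ i, c i * (f i x) j := by
      intro j
      have := congrFun hc j
      simpa [Finset.sum_apply] using this.symm
    calc MvPolynomial.eval x (∑ j, MvPolynomial.C (w j) * p j)
        = ∑ j, w j * MvPolynomial.eval x (p j) := by
          simp [map_sum, _root_.map_mul]
      _ = ∑ j, (∑ i, c i * (f i x) j) * MvPolynomial.eval x (p j) := by
          refine Finset.sum_congr rfl fun j _ => ?_
          rw [← hwj j]
      _ = ∑ i, c i * ∑ j, (f i x) j * MvPolynomial.eval x (p j) := by
          simp_rw [Finset.sum_mul, Finset.mul_sum]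
          rw [Finset.sum_comm]
          exact Finset.sum_congr rfl fun i _ => Finset.sum_congr rfl fun j _ => by ring
      _ = ∑ i, c i * MvPolynomial.eval x (∑ j, coordPoly (f i) j * p j) := by
          refine Finset.sum_congr rfl fun i _ => ?_
          rw [map_sum]
          congr 1
          refine Finset.sum_congr rfl fun j _ => ?_
          rw [_root_.map_mul, eval_coordPoly]
      _ = 0 := by simp [hA]
  · -- (ii) → (i)
    rintro ⟨c, hc⟩
    obtain ⟨q, hq⟩ := IsLocalization.exist_integer_multiples_of_finite
      (nonZeroDivisors R) c
    choose p hp using hq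
    have hqc : ∀ i, al (p i) = al q * c i := by
      intro i
      rw [hp i, Algebra.smul_def]
    have hker : ∀ j, (q : R) * MvPolynomial.C (w j) = ∑ i, p i * coordPoly (f i) j := by
      intro j
      apply hinj
      rw [_root_.map_mul, map_sum, hc j, Finset.mul_sum]
      refine Finset.sum_congr rfl fun i _ => ?_
      rw [_root_.map_mul, hqc i]
      ring
    refine ⟨zeroLocus {(q : R)}, ⟨{(q : R)}, rfl⟩,
      univ_subset_zClosure (nonZeroDivisors.ne_zero q.2), ?_⟩
    intro v hv
    have hqv : MvPolynomial.eval v (q : R) ≠ 0 := by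
      intro h0
      exact hv.2 (by intro g hg; rcases hg with rfl; exact h0)
    rw [Submodule.mem_span_range_iff_exists_fun]
    refine ⟨fun i => MvPolynomial.eval v (p i) / MvPolynomial.eval v (q : R), ?_⟩
    funext j
    have hevj : MvPolynomial.eval v (q : R) * w j
        = ∑ i, MvPolynomial.eval v (p i) * (f i v) j := by
      have := congrArg (MvPolynomial.eval v) (hker j)
      rw [_root_.map_mul, MvPolynomial.eval_C, map_sum] at this
      rw [this]
      refine Finset.sum_congr rfl fun i _ => ?_
      rw [_root_.map_mul, eval_coordPoly]
    rw [Finset.sum_apply]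
    simp only [Pi.smul_apply, smul_eq_mul]
    calc ∑ i, MvPolynomial.eval v (p i) / MvPolynomial.eval v (q : R) * (f i v) j
        = ∑ i, MvPolynomial.eval v (p i) * (f i v) j / MvPolynomial.eval v (q : R) := by
          exact Finset.sum_congr rfl fun i _ => div_mul_eq_mul_div _ _ _
      _ = (∑ i, MvPolynomial.eval v (p i) * (f i v) j) / MvPolynomial.eval v (q : R) := by
          rw [Finset.sum_div]
      _ = w j := by rw [← hevj]; exact mul_div_cancel_left₀ _ hqv


end ED
end
end

section
/- Let v, w, x, y ∈ ℂ^m be such that v_i ≠ 0 and w_i ≠ 0 for all i, and v_i w_j ≠ v_j w_i for all i ≠ j. Then vᵀSy = xᵀSw for all symmetric m×m complex matrices S if and only if (x, y) = λ(v, w) for some λ ∈ ℂ. -/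
open Matrix
open scoped BigOperators

lemma dot_stdBasis_aux (m : ℕ) (a b : Fin m → ℂ) (i j : Fin m) :
    a ⬝ᵥ (Matrix.single i j (1:ℂ)).mulVec b = a i * b j := by
  simp [dotProduct, Matrix.mulVec, Matrix.single, Finset.mul_sum,
    mul_ite, ite_and, Finset.sum_ite_eq, Finset.sum_ite_eq']

/-- Let `v, w, x, y ∈ ℂ^m` be such that `v i ≠ 0` and `w i ≠ 0` for all `i`, and
`v i * w j ≠ v j * w i` for all `i ≠ j`. Then `vᵀSy = xᵀSw` for all symmetric `m×m`
complex matrices `S` if and only if `(x, y) = λ(v, w)` for some `λ ∈ ℂ`. -/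
theorem symmetric_pairing_lemma (m : ℕ) (v w x y : Fin m → ℂ)
    (hv : ∀ i, v i ≠ 0) (hw : ∀ i, w i ≠ 0)
    (hvw : ∀ i j, i ≠ j → v i * w j ≠ v j * w i) :
    (∀ S : Matrix (Fin m) (Fin m) ℂ, Sᵀ = S → v ⬝ᵥ S.mulVec y = x ⬝ᵥ S.mulVec w) ↔
      ∃ lam : ℂ, x = lam • v ∧ y = lam • w := by
  constructor
  · intro h
    rcases Nat.eq_zero_or_pos m with hm | hm
    · refine ⟨0, funext fun i => ?_, funext fun i => ?_⟩ <;>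
        · exact absurd i.isLt (by omega)
    · have key : ∀ i j, v i * y j + v j * y i = x i * w j + x j * w i := by
        intro i j
        have hsym : (Matrix.single i j (1:ℂ) + Matrix.single j i 1)ᵀ =
            Matrix.single i j 1 + Matrix.single j i 1 := by
          ext a b
          simp [Matrix.single, and_comm]
          ring
        have := h _ hsym
        simpa [Matrix.add_mulVec, dotProduct_add, dot_stdBasis_aux] using this
      have diag : ∀ i, v i * y i = x i * w i := by
        intro i
        have := key i i
        linear_combination this / 2
      set i0 : Fin m := ⟨0, hm⟩ with hi0
      set lam : ℂ := x i0 / v i0 with hlam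
      have hx0 : x i0 = lam * v i0 := by
        rw [hlam, div_mul_cancel₀ _ (hv i0)]
      have hy0 : y i0 = lam * w i0 := by
        have h1 : v i0 * y i0 = v i0 * (lam * w i0) := by
          rw [diag i0, hx0]; ring
        exact mul_left_cancel₀ (hv i0) h1
      have main : ∀ i, x i = lam * v i ∧ y i = lam * w i := by
        intro i
        by_cases hii : i = i0
        · subst hii; exact ⟨hx0, hy0⟩
        · have hne : v i * w i0 - v i0 * w i ≠ 0 :=
            sub_ne_zero.mpr (hvw i i0 hii)
          have e1 := key i0 i
          rw [hx0, hy0] at e1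
          have e2 := diag i
          have hy : y i = lam * w i := by
            have h1 : (v i * w i0 - v i0 * w i) * y i =
                (v i * w i0 - v i0 * w i) * (lam * w i) := by
              linear_combination w i0 * e2 - w i * e1
            exact mul_left_cancel₀ hne h1
          have hx : x i = lam * v i := by
            have h1 : x i * w i = (lam * v i) * w i := by
              rw [← e2, hy]; ring
            exact mul_right_cancel₀ (hw i) h1
          exact ⟨hx, hy⟩
      exact ⟨lam, funext fun i => (main i).1, funext fun i => (main i).2⟩
  · rintro ⟨lam, rfl, rfl⟩ S hS
    simp [dotProduct_smul, Matrix.mulVec_smul, dotProduct,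
      Finset.mul_sum, Finset.smul_sum, mul_assoc, mul_comm, mul_left_comm]
end

section
/- Let D be a real diagonal n×n matrix with pairwise distinct diagonal entries. Then the set {BD − DB : B ∈ ℝ^{n×n}, Bᵀ = −B} equals the set of real symmetric n×n matrices whose diagonal entries are all zero; equivalently, it is the orthogonal complement, within the space of real symmetric matrices with the trace inner product ⟨C|D⟩ = Tr(CᵀD), of the subspace of diagonal matrices. -/
open Matrix

lemma comm_set_eq_zero_diag (n : ℕ) (d : Fin n → ℝ) (hd : Function.Injective d) :
    ({M : Matrix (Fin n) (Fin n) ℝ |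
        ∃ B : Matrix (Fin n) (Fin n) ℝ, Bᵀ = -B ∧
          M = B * Matrix.diagonal d - Matrix.diagonal d * B}
      = {M : Matrix (Fin n) (Fin n) ℝ | Mᵀ = M ∧ ∀ i, M i i = 0}) := by
  ext M
  simp only [Set.mem_setOf_eq]
  constructor
  · rintro ⟨B, hB, rfl⟩
    have hBij : ∀ i j, B j i = -B i j := by
      intro i j
      have := congrFun (congrFun hB i) j
      simpa [Matrix.transpose_apply] using this
    constructor
    · ext i j
      simp [Matrix.transpose_apply, Matrix.sub_apply, Matrix.mul_diagonal,
        Matrix.diagonal_mul, hBij i j]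
      ring
    · intro i
      simp [Matrix.sub_apply, Matrix.mul_diagonal, Matrix.diagonal_mul]
      ring
  · rintro ⟨hsym, hdiag⟩
    refine ⟨Matrix.of (fun i j => if h : i = j then 0 else M i j / (d j - d i)), ?_, ?_⟩
    · ext i j
      by_cases h : i = j
      · simp [h]
      · have hsymij : M j i = M i j := by
          have := congrFun (congrFun hsym i) j
          simpa [Matrix.transpose_apply] using this
        have h1 : d i - d j ≠ 0 := sub_ne_zero.mpr (fun hh => h (hd hh))
        have h2 : d j - d i ≠ 0 := sub_ne_zero.mpr (fun hh => h (hd hh).symm)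
        simp [Matrix.transpose_apply, h, Ne.symm h, hsymij]
        field_simp
        ring
    · ext i j
      by_cases h : i = j
      · subst h
        simp [Matrix.sub_apply, Matrix.mul_diagonal, Matrix.diagonal_mul, hdiag i]
      · have hne : d j - d i ≠ 0 := sub_ne_zero.mpr (fun hh => h (hd hh).symm)
        simp [Matrix.sub_apply, Matrix.mul_diagonal, Matrix.diagonal_mul, h]
        field_simp

/-- Let `D = diagonal d` be a real diagonal `n×n` matrix with pairwise distinct diagonal
entries. Then `{BD - DB : B skew-symmetric}` equals the set of real symmetric matrices
with zero diagonal; equivalently, it equals the orthogonal complement, within the space of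
real symmetric matrices with the trace inner product `⟨C|D⟩ = Tr(CᵀD)`, of the subspace of
diagonal matrices. -/
theorem commutator_with_diagonal (n : ℕ) (d : Fin n → ℝ) (hd : Function.Injective d) :
    ({M : Matrix (Fin n) (Fin n) ℝ |
        ∃ B : Matrix (Fin n) (Fin n) ℝ, Bᵀ = -B ∧
          M = B * Matrix.diagonal d - Matrix.diagonal d * B}
      = {M : Matrix (Fin n) (Fin n) ℝ | Mᵀ = M ∧ ∀ i, M i i = 0}) ∧
    ({M : Matrix (Fin n) (Fin n) ℝ |
        ∃ B : Matrix (Fin n) (Fin n) ℝ, Bᵀ = -B ∧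
          M = B * Matrix.diagonal d - Matrix.diagonal d * B}
      = {M : Matrix (Fin n) (Fin n) ℝ | Mᵀ = M ∧
          ∀ N : Matrix (Fin n) (Fin n) ℝ, (∃ e : Fin n → ℝ, N = Matrix.diagonal e) →
            Matrix.trace (Mᵀ * N) = 0}) := by
  have h1 := comm_set_eq_zero_diag n d hd
  refine ⟨h1, ?_⟩
  rw [h1]
  ext M
  simp only [Set.mem_setOf_eq]
  constructor
  · rintro ⟨hsym, hdiag⟩
    refine ⟨hsym, ?_⟩
    rintro N ⟨e, rfl⟩
    simp [Matrix.trace, Matrix.diag, Matrix.mul_diagonal, Matrix.transpose_apply, hdiag]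
  · rintro ⟨hsym, horth⟩
    refine ⟨hsym, fun i => ?_⟩
    have := horth (Matrix.diagonal (Pi.single i 1)) ⟨_, rfl⟩
    simpa [Matrix.trace, Matrix.diag, Matrix.mul_diagonal, Matrix.transpose_apply,
      Pi.single_apply, Finset.sum_ite_eq] using this
end
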